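/- arXiv:2508.14290 — 13 statements merged into one kernel-verified Lean document; each statement's English description precedes it below -/
import Mathlib

section
/- Let (X,+) be a magma (a set with a binary operation +, no axioms assumed) with a summation system Σ satisfying: (i) invariance under permutations of ℕ: for every summable family a : ℕ → X and every permutation φ of ℕ, the family i ↦ a(φ(i)) is summable with the same sum; (ii) prefix associativity: if a : ℕ → X is summable, then the shifted family i ↦ a(i+1) is summable and Σa = a(0) + Σ(i ↦ a(i+1)); (iii) ℕ-totality: every family ℕ → X is summable. Then for every sequence x : ℕ → X there exists y ∈ X such that x(n) + y = y for every n ∈ ℕ. -/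
/-!
Enumerate `ℕ × ℕ` through `Nat.pair` and let `y` be the sum of the family taking the value
`x k` at every index of row `k`, so that each `x n` occurs infinitely often. Shifting row `n`
one step along itself frees the index `(n, 0)`; putting that index first gives a permutation of
the family whose tail is the family itself. Permutation invariance, prefix associativity and
uniqueness of sums then give `x n + y = y`.
-/

open Function

def rowShift (n j : ℕ) : ℕ :=
  if (Nat.unpair j).1 = n then Nat.pair n ((Nat.unpair j).2 + 1) else j

theorem unpair_rowShift_fst (n j : ℕ) : (Nat.unpair (rowShift n j)).1 = (Nat.unpair j).1 := by
  unfold rowShift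
  split_ifs with h
  · rw [Nat.unpair_pair, h]
  · rfl

theorem rowShift_injective (n : ℕ) : Injective (rowShift n) := by
  intro i j hij
  have hfst : (Nat.unpair i).1 = (Nat.unpair j).1 := by
    rw [← unpair_rowShift_fst n i, ← unpair_rowShift_fst n j, hij]
  unfold rowShift at hij
  by_cases hi : (Nat.unpair i).1 = n
  · have hj : (Nat.unpair j).1 = n := hfst ▸ hi
    rw [if_pos hi, if_pos hj, Nat.pair_eq_pair] at hij
    rw [← Nat.pair_unpair i, ← Nat.pair_unpair j, hfst, Nat.add_right_cancel hij.2]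
  · rwa [if_neg hi, if_neg (hfst ▸ hi)] at hij

theorem range_rowShift (n : ℕ) : Set.range (rowShift n) = {Nat.pair n 0}ᶜ := by
  ext m
  simp only [Set.mem_range, Set.mem_compl_singleton_iff]
  constructor
  · rintro ⟨j, rfl⟩ hj
    unfold rowShift at hj
    split_ifs at hj with h
    · simp [Nat.pair_eq_pair] at hj
    · exact h (by rw [hj, Nat.unpair_pair])
  · intro hm
    by_cases h : (Nat.unpair m).1 = n
    · have hsnd : (Nat.unpair m).2 ≠ 0 := fun h' => hm (by rw [← h, ← h', Nat.pair_unpair])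
      refine ⟨Nat.pair n ((Nat.unpair m).2 - 1), ?_⟩
      rw [rowShift, Nat.unpair_pair, if_pos rfl,
        Nat.sub_add_cancel (Nat.one_le_iff_ne_zero.mpr hsnd), ← h, Nat.pair_unpair]
    · exact ⟨m, if_neg h⟩

theorem Nat.exists_perm_zero_succ {σ : ℕ → ℕ} (hσ : Injective σ) {p : ℕ}
    (hrange : Set.range σ = {p}ᶜ) : ∃ φ : Equiv.Perm ℕ, φ 0 = p ∧ ∀ i, φ (i + 1) = σ i := by
  have hp : ∀ i, σ i ≠ p := fun i => (hrange ▸ Set.mem_range_self i : σ i ∈ ({p}ᶜ : Set ℕ))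
  let f : ℕ → ℕ := fun
    | 0 => p
    | i + 1 => σ i
  have hf : Bijective f := by
    refine ⟨?_, fun m => ?_⟩
    · rintro (_ | i) (_ | j) hij
      · rfl
      · exact absurd hij.symm (hp j)
      · exact absurd hij (hp i)
      · exact congrArg (· + 1) (hσ hij)
    · by_cases hm : m = p
      · exact ⟨0, hm.symm⟩
      · obtain ⟨i, hi⟩ : m ∈ Set.range σ := hrange ▸ hm
        exact ⟨i + 1, hi⟩
  exact ⟨Equiv.ofBijective f hf, rfl, fun _ => rfl⟩

theorem add_apply_perm_zero_eq_sum {X : Type*} (add : X → X → X) (S : (ℕ → X) → X → Prop)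
    (hfun : ∀ a x y, S a x → S a y → x = y)
    (hperm : ∀ (a : ℕ → X) (x : X) (φ : Equiv.Perm ℕ), S a x → S (fun i => a (φ i)) x)
    (hprefix : ∀ (a : ℕ → X) (x : X), S a x → ∃ y, S (fun i => a (i + 1)) y ∧ x = add (a 0) y)
    {a : ℕ → X} {y : X} (hy : S a y) (φ : Equiv.Perm ℕ) (hφ : ∀ i, a (φ (i + 1)) = a i) :
    add (a (φ 0)) y = y := by
  obtain ⟨z, hz, hyz⟩ := hprefix _ _ (hperm a y φ hy)
  have hzy : z = y := hfun a z y (by simpa only [hφ] using hz) hy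
  exact (hzy ▸ hyz).symm

/-- A magma `(X,+)` with a summation system on `ℕ`-indexed families
that is invariant under permutations of `ℕ`, satisfies prefix associativity, and is
`ℕ`-total: for every sequence `x : ℕ → X` there exists `y` with `x n + y = y` for all `n`. -/
theorem stmt_1 {X : Type*} (add : X → X → X)
    (S : (ℕ → X) → X → Prop)
    (hfun : ∀ a x y, S a x → S a y → x = y)
    (hperm : ∀ (a : ℕ → X) (x : X) (φ : Equiv.Perm ℕ),
      S a x → S (fun i => a (φ i)) x)
    (hprefix : ∀ (a : ℕ → X) (x : X), S a x →
      ∃ y, S (fun i => a (i + 1)) y ∧ x = add (a 0) y)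
    (htotal : ∀ a : ℕ → X, ∃ x, S a x) :
    ∀ x : ℕ → X, ∃ y : X, ∀ n : ℕ, add (x n) y = y := by
  intro x
  obtain ⟨y, hy⟩ := htotal fun i => x (Nat.unpair i).1
  refine ⟨y, fun n => ?_⟩
  obtain ⟨φ, hφ0, hφsucc⟩ := Nat.exists_perm_zero_succ (rowShift_injective n) (range_rowShift n)
  have key := add_apply_perm_zero_eq_sum add S hfun hperm hprefix hy φ fun i => by
    simp only [hφsucc, unpair_rowShift_fst]
  simpa only [hφ0, Nat.unpair_pair] using key
end

section
/- (Eilenberg–Mazur swindle.) Let (X,+) be a magma with a two-sided additive identity 0 (0 + x = x + 0 = x for all x), and let Σ be a summation system on X such that whenever the constant family (a+b)_{i∈ℕ} is summable and the constant family (b+a)_{i∈ℕ} is summable, one has Σ(a+b)_{i∈ℕ} = a + Σ(b+a)_{i∈ℕ}. Assume the constant family (0)_{i∈ℕ} is summable with sum 0. Then the only element of X possessing a two-sided additive inverse is 0; that is, if a, b ∈ X satisfy a + b = 0 and b + a = 0, then a = 0. -/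
theorem stmt_2_general {X : Type*} (add : X → X → X) (zero : X)
    (hzr : ∀ x, add x zero = x)
    (S : (ℕ → X) → X → Prop)
    (hshift : ∀ a b s t : X,
      S (fun _ => add a b) s → S (fun _ => add b a) t → s = add a t)
    (h0 : S (fun _ => zero) zero)
    (a b : X) (hab : add a b = zero) (hba : add b a = zero) :
    a = zero :=
  calc a = add a zero := (hzr a).symm
    _ = zero := (hshift a b zero zero (hab ▸ h0) (hba ▸ h0)).symm

/-- Eilenberg–Mazur swindle.  Let `(X,+)` be a magma with two-sided
identity `zero` and a summation system in which
`Σ(a+b)_{i∈ℕ} = a + Σ(b+a)_{i∈ℕ}` whenever both constant sums exist, and the constant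
zero family sums to `zero`.  If `a + b = zero` and `b + a = zero` then `a = zero`. -/
theorem stmt_2 {X : Type*} (add : X → X → X) (zero : X)
    (hzl : ∀ x, add zero x = x) (hzr : ∀ x, add x zero = x)
    (S : (ℕ → X) → X → Prop)
    (hfun : ∀ a x y, S a x → S a y → x = y)
    (hshift : ∀ a b s t : X,
      S (fun _ => add a b) s → S (fun _ => add b a) t → s = add a t)
    (h0 : S (fun _ => zero) zero)
    (a b : X) (hab : add a b = zero) (hba : add b a = zero) :
    a = zero :=
  stmt_2_general add zero hzr S hshift h0 a b hab hba
end

section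
/- Let X be a set with a summation system Σ such that the empty family is summable, and assume that any two summable families with the same core have the same sum. Define Σ' to be the relation consisting of all pairs (x, s), where x is a family in X and s ∈ X, such that some core-extension of x is Σ-summable with sum s. Then: (1) Σ' is a partial function, hence a summation system on X; (2) Σ' extends Σ; (3) Σ' satisfies: if b is in the domain of Σ' and b is a core-extension of a, then a is in the domain of Σ' and Σ'a = Σ'b; and (4) Σ' is contained in every summation system extending Σ that satisfies property (3). -/
/-! Families over a fixed universe `Ω` of indices are encoded as partial functions
`Ω → Option X`; the index set of a family is its domain `{ω | a ω ≠ none}`, and a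
subfamily is a restriction of the partial function. -/

open Classical in
/-- The core of a family: the restriction of `a` to the indices whose entry differs
from the empty sum `z = Σ()`. -/
noncomputable def coreOf {X Ω : Type*} (z : X) (a : Ω → Option X) : Ω → Option X :=
  fun ω => if a ω = some z then none else a ω

/-- `b` is a core-extension of `a`: `a` is a restriction (subfamily) of `b` and the two
families have the same core. -/
def IsCoreExtension {X Ω : Type*} (z : X) (b a : Ω → Option X) : Prop :=
  (∀ ω, a ω ≠ none → b ω = a ω) ∧ coreOf z b = coreOf z a

section

variable {X Ω : Type*}

theorem IsCoreExtension.refl (z : X) (a : Ω → Option X) : IsCoreExtension z a a :=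
  ⟨fun _ _ => rfl, rfl⟩

theorem IsCoreExtension.trans {z : X} {a b c : Ω → Option X}
    (hcb : IsCoreExtension z c b) (hba : IsCoreExtension z b a) : IsCoreExtension z c a := by
  refine ⟨fun ω hω => ?_, hcb.2.trans hba.2⟩
  have hbω : b ω = a ω := hba.1 ω hω
  rw [hcb.1 ω (hbω ▸ hω), hbω]

/-- The relation `Σ'`. -/
def coreExtensionSum (S : (Ω → Option X) → X → Prop) (z : X) (a : Ω → Option X) (x : X) :
    Prop :=
  ∃ b, IsCoreExtension z b a ∧ S b x

variable {S : (Ω → Option X) → X → Prop} {z : X}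

theorem coreExtensionSum_unique
    (hcore : ∀ a b x y, S a x → S b y → coreOf z a = coreOf z b → x = y)
    {a : Ω → Option X} {x y : X}
    (hx : coreExtensionSum S z a x) (hy : coreExtensionSum S z a y) : x = y := by
  obtain ⟨b, hba, hSb⟩ := hx
  obtain ⟨c, hca, hSc⟩ := hy
  exact hcore b c x y hSb hSc (hba.2.trans hca.2.symm)

theorem coreExtensionSum_of_sum {a : Ω → Option X} {x : X} (h : S a x) :
    coreExtensionSum S z a x :=
  ⟨a, .refl z a, h⟩

theorem coreExtensionSum_of_isCoreExtension {a b : Ω → Option X} {x : X}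
    (hba : IsCoreExtension z b a) (hb : coreExtensionSum S z b x) :
    coreExtensionSum S z a x :=
  let ⟨c, hcb, hSc⟩ := hb
  ⟨c, hcb.trans hba, hSc⟩

theorem coreExtensionSum_le {T : (Ω → Option X) → X → Prop} (hST : ∀ a x, S a x → T a x)
    (hT : ∀ a b x, IsCoreExtension z b a → T b x → T a x)
    {a : Ω → Option X} {x : X} (h : coreExtensionSum S z a x) : T a x :=
  let ⟨b, hba, hSb⟩ := h
  hT a b x hba (hST b x hSb)

end

theorem stmt_4_general {X Ω : Type*}
    (S : (Ω → Option X) → X → Prop)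
    (z : X)
    (hcore : ∀ a b x y, S a x → S b y → coreOf z a = coreOf z b → x = y) :
    (∀ a x y, (∃ b, IsCoreExtension z b a ∧ S b x) →
      (∃ b, IsCoreExtension z b a ∧ S b y) → x = y) ∧
    (∀ a x, S a x → ∃ b, IsCoreExtension z b a ∧ S b x) ∧
    (∀ a b x, IsCoreExtension z b a → (∃ c, IsCoreExtension z c b ∧ S c x) →
      ∃ c, IsCoreExtension z c a ∧ S c x) ∧
    (∀ T : (Ω → Option X) → X → Prop,
      (∀ a x y, T a x → T a y → x = y) →
      (∀ a x, S a x → T a x) →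
      (∀ a b x, IsCoreExtension z b a → T b x → T a x) →
      ∀ a x, (∃ b, IsCoreExtension z b a ∧ S b x) → T a x) := by
  exact ⟨fun _ _ _ => coreExtensionSum_unique hcore, fun _ _ => coreExtensionSum_of_sum,
    fun _ _ _ => coreExtensionSum_of_isCoreExtension,
    fun _ _ hST hT _ _ => coreExtensionSum_le hST hT⟩

/-- If the empty family is `S`-summable with sum `z`, and any two
summable families with the same core have the same sum, then
`S' a s := ∃ b, b core-extension of a ∧ S b s` is a summation system extending `S`,
it satisfies the forward implication of the "zero means nothing" axiom, and it is
contained in every summation system extending `S` with that property. -/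
theorem stmt_4 {X Ω : Type*}
    (S : (Ω → Option X) → X → Prop)
    (hfun : ∀ a x y, S a x → S a y → x = y)
    (z : X) (hz : S (fun _ => none) z)
    (hcore : ∀ a b x y, S a x → S b y → coreOf z a = coreOf z b → x = y) :
    (∀ a x y, (∃ b, IsCoreExtension z b a ∧ S b x) →
      (∃ b, IsCoreExtension z b a ∧ S b y) → x = y) ∧
    (∀ a x, S a x → ∃ b, IsCoreExtension z b a ∧ S b x) ∧
    (∀ a b x, IsCoreExtension z b a → (∃ c, IsCoreExtension z c b ∧ S c x) →
      ∃ c, IsCoreExtension z c a ∧ S c x) ∧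
    (∀ T : (Ω → Option X) → X → Prop,
      (∀ a x y, T a x → T a y → x = y) →
      (∀ a x, S a x → T a x) →
      (∀ a b x, IsCoreExtension z b a → T b x → T a x) →
      ∀ a x, (∃ b, IsCoreExtension z b a ∧ S b x) → T a x) :=
  stmt_4_general S z hcore
end

section
/- Let X be a set with a summation system Σ that is nonempty (as a relation) and satisfies the monoid merger axiom. Let Y be the image of Σ and let Σ' be the restriction of Σ to families with values in Y. Then Σ', as a summation system on Y, satisfies: (i) every singleton family from Y is summable and sums to its unique member; (ii) reindexing invariance: if φ : I' → I is a bijection and (a_i)_{i∈I} is summable, then (a_{φ(i')})_{i'∈I'} is summable with the same sum; (iii) the empty family is summable, and if b is a core-extension of a then b is summable if and only if a is summable, in which case Σ'a = Σ'b; and (iv) every subfamily (restriction) of a summable family is summable. -/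
/-- The monoid merger axiom for a summation system `S` on `X` (families indexed by
types in the fixed universe `Type`): if `a : I → X` is summable with sum `x` and
`ψ : K → 𝒫(I)` is such that each `i ∈ I` lies in `ψ k` for exactly one `k`, then each
inner family `(a i)_{i ∈ ψ k}` is summable, and for any choice `t` of the inner sums,
the family `t : K → X` is summable with sum `x`. -/
def Merger {X : Type*} (S : (I : Type) → (I → X) → X → Prop) : Prop :=
  ∀ (I K : Type) (a : I → X) (x : X), S I a x →
    ∀ ψ : K → Set I, (∀ i : I, ∃! k : K, i ∈ ψ k) →
      (∀ k : K, ∃ s, S {i : I // i ∈ ψ k} (fun i => a i.1) s) ∧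
      (∀ t : K → X,
        (∀ k : K, S {i : I // i ∈ ψ k} (fun i => a i.1) (t k)) → S K t x)

/-!
Each property comes from one application of the merger axiom to a suitable partition.
Partitioning a summable family into `s` and `sᶜ` makes its restrictions summable; partitioning
it into `∅` pieces over an empty index type produces the empty sum `z`. Merging a family
indexed by a single point shows that a one-point family sums to its value, provided that value
is itself a sum. Then a reindexing along a bijection `φ` is a merger into the singletons
`{φ k}`, and a core-extension of `a` is a merger of `a` into the fibres of the inclusion, each
fibre being a singleton or empty.
-/

def sumRange {X : Type*} (S : (I : Type) → (I → X) → X → Prop) : Set X :=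
  {x | ∃ (I : Type) (a : I → X), S I a x}

namespace Merger

variable {X : Type*} {S : (I : Type) → (I → X) → X → Prop}

theorem exists_sum_restrict (hS : Merger S) {I : Type} {a : I → X} {x : X} (h : S I a x)
    (s : Set I) : ∃ y, S {i : I // i ∈ s} (fun i => a i.1) y := by
  refine (hS I Bool a x h (fun k => cond k s sᶜ) fun i => ?_).1 true
  by_cases hi : i ∈ s
  · exact ⟨true, hi, fun k hk => by cases k <;> simp_all⟩
  · exact ⟨false, hi, fun k hk => by cases k <;> simp_all⟩

theorem exists_empty_sum (hS : Merger S) (hne : ∃ (I : Type) (a : I → X) (x : X), S I a x) :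
    ∃ z ∈ sumRange S, ∀ (E : Type), IsEmpty E → ∀ t : E → X, S E t z := by
  obtain ⟨I, a, x, h⟩ := hne
  obtain ⟨z, hz⟩ := hS.exists_sum_restrict h ∅
  refine ⟨z, ⟨_, _, hz⟩, fun E hE t => ?_⟩
  exact (hS _ E _ z hz (fun _ => ∅) fun i => absurd i.2 id).2 t fun k => hE.elim k

theorem exists_const_sum_of_unique (hS : Merger S) {I : Type} {a : I → X} {c : X}
    (h : S I a c) : ∃ u, ∀ (K : Type) (k₀ : K), (∀ k, k = k₀) → S K (fun _ => u) c := by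
  obtain ⟨u, hu⟩ :=
    (hS I Unit a c h (fun _ => Set.univ) fun _ => ⟨(), trivial, fun _ _ => rfl⟩).1 ()
  exact ⟨u, fun K k₀ hK =>
    (hS I K a c h (fun _ => Set.univ) fun _ => ⟨k₀, trivial, fun k _ => hK k⟩).2 _ fun _ => hu⟩

theorem sum_of_unique (hS : Merger S) {J : Type} (a : J → X) (j₀ : J) (hJ : ∀ j, j = j₀)
    (ha : a j₀ ∈ sumRange S) : S J a (a j₀) := by
  obtain ⟨I, b, hb⟩ := ha
  obtain ⟨u, hu⟩ := hS.exists_const_sum_of_unique hb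
  have hconst : S J (fun _ => a j₀) (a j₀) :=
    (hS Unit J _ _ (hu Unit () fun _ => rfl) (fun _ => Set.univ)
      fun _ => ⟨j₀, trivial, fun j _ => hJ j⟩).2 _
      fun _ => hu _ ⟨(), trivial⟩ fun _ => rfl
  rwa [show a = fun _ => a j₀ from funext fun j => congrArg a (hJ j)]

theorem sum_comp_bijective (hS : Merger S) {I I' : Type} {φ : I' → I}
    (hφ : Function.Bijective φ) {a : I → X} (ha : ∀ i, a i ∈ sumRange S) {x : X}
    (h : S I a x) : S I' (fun i' => a (φ i')) x := by
  refine (hS I I' a x h (fun k => {φ k}) fun i => ?_).2 _ fun k =>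
    hS.sum_of_unique (fun m : {i // i ∈ ({φ k} : Set I)} => a m.1) ⟨φ k, rfl⟩
      (fun m => Subtype.ext m.2) (ha _)
  obtain ⟨k, rfl⟩ := hφ.2 i
  exact ⟨k, rfl, fun k' hk' => hφ.1 hk'.symm⟩

theorem sum_of_sum_restrict (hS : Merger S) {J : Type} {b : J → X}
    (hb : ∀ j, b j ∈ sumRange S) {z : X} (hz : ∀ (E : Type), IsEmpty E → ∀ t : E → X, S E t z)
    {s : Set J} (hbs : ∀ j ∉ s, b j = z) {y : X}
    (h : S {j : J // j ∈ s} (fun j => b j.1) y) : S J b y := by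
  let ψ : J → Set {j' // j' ∈ s} := fun j => {k | k.1 = j}
  refine (hS _ J _ y h ψ fun k => ⟨k.1, rfl, fun _ hk => hk.symm⟩).2 b fun j => ?_
  by_cases hj : j ∈ s
  · exact hS.sum_of_unique (fun m : {k // k ∈ ψ j} => b m.1.1) ⟨⟨j, hj⟩, rfl⟩
      (fun m => Subtype.ext (Subtype.ext m.2)) (hb j)
  · rw [hbs j hj]
    exact hz {k // k ∈ ψ j} ⟨fun m => hj (m.2 ▸ m.1.2)⟩ _

end Merger

/-- Let `S` be a nonempty summation system on `X` satisfying the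
monoid merger axiom, let `Y` be the image of `S`, and let `S'` be the restriction of
`S` to families with values in `Y`.  Then `S'` satisfies: (i) singletons sum simply;
(ii) reindexing invariance; (iii) the empty family is summable with sum `z`, and a
family is summable iff any of its core-restrictions is, with the same sum; and
(iv) subfamilies of summable families are summable. -/
theorem stmt_5 {X : Type*}
    (S : (I : Type) → (I → X) → X → Prop)
    (hfun : ∀ (I : Type) (a : I → X) (x y : X), S I a x → S I a y → x = y)
    (hne : ∃ (I : Type) (a : I → X) (x : X), S I a x)
    (hmerge : Merger S)
    (Y : Set X) (hY : Y = {x | ∃ (I : Type) (a : I → X), S I a x})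
    (S' : (I : Type) → (I → Y) → Y → Prop)
    (hS' : ∀ (I : Type) (a : I → Y) (y : Y),
      S' I a y ↔ S I (fun i => (a i : X)) (y : X)) :
    (∀ (I : Type) (i₀ : I), (∀ i, i = i₀) → ∀ a : I → Y, S' I a (a i₀)) ∧
    (∀ (I I' : Type) (φ : I' → I), Function.Bijective φ →
      ∀ (a : I → Y) (y : Y), S' I a y → S' I' (fun i' => a (φ i')) y) ∧
    (∃ z : Y, (∀ (I : Type), IsEmpty I → ∀ a : I → Y, S' I a z) ∧
      ∀ (J : Type) (b : J → Y) (s : Set J), (∀ j : J, b j ≠ z → j ∈ s) →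
        ∀ y : Y, (S' J b y ↔ S' {j : J // j ∈ s} (fun j => b j.1) y)) ∧
    (∀ (I : Type) (a : I → Y) (y : Y), S' I a y →
      ∀ s : Set I, ∃ y', S' {i : I // i ∈ s} (fun i => a i.1) y') := by
  change Y = sumRange S at hY
  subst hY
  obtain ⟨z, hzY, hz⟩ := hmerge.exists_empty_sum hne
  refine ⟨fun I i₀ hI a => ?_, fun I I' φ hφ a y h => ?_, ⟨⟨z, hzY⟩, fun I hI a => ?_,
    fun J b s hbs y => ?_⟩, fun I a y h s => ?_⟩
  · exact (hS' _ _ _).2 (hmerge.sum_of_unique _ i₀ hI (a i₀).2)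
  · exact (hS' _ _ _).2 (hmerge.sum_comp_bijective hφ (fun i => (a i).2) ((hS' _ _ _).1 h))
  · exact (hS' _ _ _).2 (hz I hI _)
  · have hbs' : ∀ j ∉ s, (b j : X) = z := fun j hj =>
      congrArg Subtype.val (not_imp_comm.1 (hbs j) hj)
    have hext := fun y => hmerge.sum_of_sum_restrict (y := y) (fun j => (b j).2) hz hbs'
    rw [hS', hS']
    refine ⟨fun h => ?_, hext _⟩
    obtain ⟨y', hy'⟩ := hmerge.exists_sum_restrict h s
    rwa [← hfun _ _ _ _ (hext _ hy') h]
  · obtain ⟨y', hy'⟩ := hmerge.exists_sum_restrict ((hS' _ _ _).1 h) s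
    exact ⟨⟨y', _, _, hy'⟩, (hS' _ _ _).2 hy'⟩
end

section
/- Let (X,+) be an abelian group with a summation system Σ that is surjective and satisfies the monoid merger axiom and additive extension closure. Then Σ satisfies addition functoriality — for all summable families a and b, the zero-extended componentwise sum a + b is summable with Σ(a+b) = Σa + Σb — if and only if a + b is summable whenever a and b are summable families with distinct index sets. -/
/-! Families over a fixed universe `Ω` of indices are encoded as partial functions
`Ω → Option X`; the index set of a family is its domain `{ω | a ω ≠ none}`. -/

open Classical in
/-- The restriction of a family to a subset `s` of the index universe. -/
noncomputable def restrictFam {X Ω : Type*} (a : Ω → Option X) (s : Set Ω) :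
    Ω → Option X :=
  fun ω => if ω ∈ s then a ω else none

/-- The componentwise sum of two families, defined on the union of their index sets,
each family being extended by `0` outside its own index set. -/
def addFam {X Ω : Type*} [Add X] (a b : Ω → Option X) : Ω → Option X :=
  fun ω =>
    match a ω, b ω with
    | none, none => none
    | some x, none => some x
    | none, some y => some y
    | some x, some y => some (x + y)

open Classical in
/-- The extension of a family by a single new entry `x` at an index `ℓ`. -/
noncomputable def extendFam {X Ω : Type*} (a : Ω → Option X) (ℓ : Ω) (x : X) :
    Ω → Option X :=
  fun ω => if ω = ℓ then some x else a ω

open Classical in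
/-- The family with index set `K` and entries given by `t`. -/
noncomputable def maskFam {X Ω : Type*} (K : Set Ω) (t : Ω → X) : Ω → Option X :=
  fun ω => if ω ∈ K then some (t ω) else none

/-- The monoid merger axiom: if `a` is summable with sum `x` and `ψ` assigns to each
`k ∈ K` a subset of the index set of `a` so that each index of `a` lies in `ψ k` for
exactly one `k ∈ K`, then each inner restriction is summable, and for any choice `t`
of the inner sums the family `(t k)_{k ∈ K}` is summable with sum `x`. -/
def MergerOpt {X Ω : Type*} (S : (Ω → Option X) → X → Prop) : Prop :=
  ∀ (a : Ω → Option X) (x : X), S a x →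
    ∀ (K : Set Ω) (ψ : Ω → Set Ω),
      (∀ k ∈ K, ψ k ⊆ {ω | a ω ≠ none}) →
      (∀ ω, a ω ≠ none → ∃! k, k ∈ K ∧ ω ∈ ψ k) →
      (∀ k ∈ K, ∃ s, S (restrictFam a (ψ k)) s) ∧
      (∀ t : Ω → X, (∀ k ∈ K, S (restrictFam a (ψ k)) (t k)) →
        S (maskFam K t) x)

/-!
A family with finitely many indices is built from a one-point family (summable by
surjectivity and merging) by repeated extension, so its sum is the finite sum of its entries;
this settles additivity when `Ω` is finite. When `Ω` is infinite, fix `e : Ω ⊕ Ω ≃ Ω` and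
merge `a` and `b` along `e ∘ inl` and `e ∘ inr` onto families `a'`, `b'` with disjoint index
sets. These index sets differ, so `a' + b'` is summable by hypothesis, and merging it into its
two halves shows that its sum is `x + y`. Merging `a' + b'` along the fibres
`{e (inl k), e (inr k)}` finally gives `a + b` with sum `x + y`.
-/

section Families

variable {X Ω : Type*}

def indexSet (a : Ω → Option X) : Set Ω := {ω | a ω ≠ none}

@[simp]
lemma mem_indexSet {a : Ω → Option X} {ω : Ω} : ω ∈ indexSet a ↔ a ω ≠ none := Iff.rfl

lemma indexSet_eq_empty_iff {a : Ω → Option X} : indexSet a = ∅ ↔ a = fun _ => none := by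
  simp [Set.eq_empty_iff_forall_notMem, funext_iff]

lemma indexSet_restrictFam (a : Ω → Option X) (s : Set Ω) :
    indexSet (restrictFam a s) = indexSet a ∩ s := by
  ext ω; by_cases hω : ω ∈ s <;> simp [restrictFam, hω]

lemma indexSet_maskFam (K : Set Ω) (t : Ω → X) : indexSet (maskFam K t) = K := by
  ext ω; by_cases hω : ω ∈ K <;> simp [maskFam, hω]

lemma indexSet_addFam [Add X] (a b : Ω → Option X) :
    indexSet (addFam a b) = indexSet a ∪ indexSet b := by
  ext ω; cases ha : a ω <;> cases hb : b ω <;> simp [addFam, ha, hb]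

lemma addFam_comm [AddCommMagma X] (a b : Ω → Option X) : addFam a b = addFam b a := by
  funext ω; cases ha : a ω <;> cases hb : b ω <;> simp [addFam, ha, hb, add_comm]

lemma addFam_none_left [Add X] (b : Ω → Option X) : addFam (fun _ => none) b = b := by
  funext ω; cases hb : b ω <;> simp [addFam, hb]

lemma restrictFam_inter_indexSet (a : Ω → Option X) (s : Set Ω) :
    restrictFam a (s ∩ indexSet a) = restrictFam a s := by
  funext ω; by_cases hs : ω ∈ s <;> by_cases ha : a ω = none <;> simp [restrictFam, hs, ha]

lemma restrictFam_of_indexSet_subset {a : Ω → Option X} {s : Set Ω} (h : indexSet a ⊆ s) :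
    restrictFam a s = a := by
  funext ω
  by_cases hs : ω ∈ s
  · simp [restrictFam, hs]
  · have ha : a ω = none := by simpa using mt (@h ω) hs
    simp [restrictFam, hs, ha]

lemma restrictFam_addFam_indexSet_left [Add X] {a b : Ω → Option X}
    (hd : Disjoint (indexSet a) (indexSet b)) : restrictFam (addFam a b) (indexSet a) = a := by
  funext ω
  by_cases ha : a ω = none
  · simp [restrictFam, ha]
  · have hb : b ω = none := by simpa using hd.notMem_of_mem_left (a := ω) ha
    obtain ⟨u, hu⟩ := Option.ne_none_iff_exists'.mp ha
    simp [restrictFam, addFam, hu, hb]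

lemma extendFam_restrictFam {a : Ω → Option X} {s : Set Ω} {k : Ω} {v : X}
    (hs : indexSet a ⊆ insert k s) (hk : a k = some v) :
    extendFam (restrictFam a s) k v = a := by
  funext ω
  by_cases hωk : ω = k
  · simp [extendFam, hωk, hk]
  · by_cases hωs : ω ∈ s
    · simp [extendFam, restrictFam, hωk, hωs]
    · have ha : a ω = none := by simpa [hωk, hωs] using mt (@hs ω)
      simp [extendFam, restrictFam, hωk, hωs, ha]

lemma restrictFam_addFam_compl_indexSet_left [Add X] {a b : Ω → Option X}
    (hd : Disjoint (indexSet a) (indexSet b)) :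
    restrictFam (addFam a b) (indexSet a)ᶜ = b := by
  funext ω
  by_cases ha : a ω = none
  · cases hb : b ω <;> simp [restrictFam, addFam, ha, hb]
  · have hb : b ω = none := by simpa using hd.notMem_of_mem_left (a := ω) ha
    simp [restrictFam, ha, hb]

lemma preimage_sumElim_id_id_symm_singleton (e : Ω ⊕ Ω ≃ Ω) (k : Ω) :
    (fun γ => Sum.elim id id (e.symm γ)) ⁻¹' {k} = {e (.inl k), e (.inr k)} := by
  ext γ
  obtain ⟨s, rfl⟩ := e.surjective γ
  cases s <;> simp [eq_comm]

def zeroExtend [Zero X] (a : Ω → Option X) (ω : Ω) : X := (a ω).getD 0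

lemma support_zeroExtend_subset [Zero X] (a : Ω → Option X) :
    Function.support (zeroExtend a) ⊆ indexSet a := by
  intro ω h ha
  simp_all [zeroExtend]

lemma zeroExtend_maskFam [Zero X] (K : Set Ω) (t : Ω → X) :
    zeroExtend (maskFam K t) = K.indicator t := by
  funext ω; by_cases hω : ω ∈ K <;> simp [zeroExtend, maskFam, hω]

lemma zeroExtend_restrictFam [Zero X] (a : Ω → Option X) (s : Set Ω) :
    zeroExtend (restrictFam a s) = s.indicator (zeroExtend a) := by
  funext ω; by_cases hω : ω ∈ s <;> simp [zeroExtend, restrictFam, hω]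

lemma zeroExtend_addFam [AddZeroClass X] (a b : Ω → Option X) :
    zeroExtend (addFam a b) = zeroExtend a + zeroExtend b := by
  funext ω; cases ha : a ω <;> cases hb : b ω <;> simp [zeroExtend, addFam, ha, hb]

lemma maskFam_indexSet_zeroExtend [Zero X] (a : Ω → Option X) :
    maskFam (indexSet a) (zeroExtend a) = a := by
  funext ω; cases ha : a ω <;> simp [maskFam, zeroExtend, ha]

end Families

def AddExtensionClosed {X Ω : Type*} [Add X] (S : (Ω → Option X) → X → Prop) : Prop :=
  ∀ (a : Ω → Option X) (x : X), S a x →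
    ∀ (ℓ : Ω) (y : X), a ℓ = none → S (extendFam a ℓ y) (x + y)

noncomputable def pushFam {X Ω : Type*} [AddCommMonoid X] (p : Ω → Ω) (a : Ω → Option X) :
    Ω → Option X :=
  maskFam (p '' indexSet a) fun k => ∑ᶠ ω ∈ p ⁻¹' {k}, zeroExtend a ω

section PushFam

variable {X Ω : Type*} [AddCommMonoid X]

lemma pushFam_apply_of_injective {p : Ω → Ω} (hp : p.Injective) (a : Ω → Option X)
    (ω : Ω) : pushFam p a (p ω) = a ω := by
  by_cases h : a ω = none
  · simp [pushFam, maskFam, hp.mem_set_image, h]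
  · obtain ⟨u, hu⟩ := Option.ne_none_iff_exists'.mp h
    have hfibre : p ⁻¹' {p ω} = {ω} := by ext; simp [hp.eq_iff]
    simp [pushFam, maskFam, hp.mem_set_image, hfibre, zeroExtend, hu]

lemma pushFam_apply_of_notMem_range {p : Ω → Ω} (a : Ω → Option X) {γ : Ω}
    (h : γ ∉ Set.range p) : pushFam p a γ = none := by
  have : γ ∉ p '' indexSet a := fun hγ => h (Set.image_subset_range _ _ hγ)
  simp [pushFam, maskFam, this]

lemma indexSet_pushFam (p : Ω → Ω) (a : Ω → Option X) :
    indexSet (pushFam p a) = p '' indexSet a :=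
  indexSet_maskFam _ _

lemma pushFam_sumElim_id_id_symm_addFam (e : Ω ⊕ Ω ≃ Ω) (a b : Ω → Option X) :
    pushFam (fun γ => Sum.elim id id (e.symm γ))
      (addFam (pushFam (fun ω => e (.inl ω)) a) (pushFam (fun ω => e (.inr ω)) b)) =
      addFam a b := by
  set c := addFam (pushFam (fun ω => e (.inl ω)) a) (pushFam (fun ω => e (.inr ω)) b)
  have hinl : (fun ω => e (.inl ω)).Injective := e.injective.comp Sum.inl_injective
  have hinr : (fun ω => e (.inr ω)).Injective := e.injective.comp Sum.inr_injective
  have hc₁ (ω : Ω) : c (e (.inl ω)) = a ω := by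
    have h := pushFam_apply_of_notMem_range (p := fun ω => e (.inr ω)) b
      (γ := e (.inl ω)) (by simp)
    cases ha : a ω <;> simp_all [c, addFam, pushFam_apply_of_injective hinl a ω]
  have hc₂ (ω : Ω) : c (e (.inr ω)) = b ω := by
    have h := pushFam_apply_of_notMem_range (p := fun ω => e (.inl ω)) a
      (γ := e (.inr ω)) (by simp)
    cases hb : b ω <;> simp_all [c, addFam, pushFam_apply_of_injective hinr b ω]
  rw [← maskFam_indexSet_zeroExtend (addFam a b), indexSet_addFam, zeroExtend_addFam]
  unfold pushFam
  congr 1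
  · ext k
    rw [Set.mem_image, e.surjective.exists]
    simp [hc₁, hc₂]
  · funext k
    rw [preimage_sumElim_id_id_symm_singleton, finsum_mem_pair (by simp)]
    simp [zeroExtend, hc₁, hc₂]

end PushFam

section SummationSystem

variable {X Ω : Type*} {S : (Ω → Option X) → X → Prop}

lemma summable_maskFam_singleton
    (hsurj : Relator.RightTotal S) (hmerge : MergerOpt S) (k : Ω) (t : Ω → X) :
    S (maskFam {k} t) (t k) := by
  obtain ⟨a, ha⟩ := hsurj (t k)
  refine (hmerge a _ ha {k} (fun _ => indexSet a) (fun _ _ => subset_rfl)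
    fun ω hω => ⟨k, ⟨rfl, hω⟩, fun _ h => h.1⟩).2 t fun k' hk' => ?_
  rwa [restrictFam_of_indexSet_subset subset_rfl, Set.mem_singleton_iff.mp hk']

lemma summable_maskFam_image
    (hmerge : MergerOpt S) {c : Ω → Option X} {z : X} (hc : S c z) (p : Ω → Ω) (t : Ω → X)
    (ht : ∀ k ∈ p '' indexSet c, S (restrictFam c (p ⁻¹' {k})) (t k)) :
    S (maskFam (p '' indexSet c) t) z := by
  refine (hmerge c z hc (p '' indexSet c) (fun k => p ⁻¹' {k} ∩ indexSet c)
    (fun _ _ => Set.inter_subset_right)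
    fun ω hω => ⟨p ω, ⟨⟨ω, hω, rfl⟩, rfl, hω⟩, fun _ hk => hk.2.1.symm⟩).2 t
    fun k hk => ?_
  rw [restrictFam_inter_indexSet]
  exact ht k hk

variable [AddCommMonoid X]

lemma summable_finsum_of_finite (hsurj : Relator.RightTotal S) (hmerge : MergerOpt S)
    (hext : AddExtensionClosed S) {a : Ω → Option X} (hfin : (indexSet a).Finite)
    (hne : (indexSet a).Nonempty) : S a (∑ᶠ ω, zeroExtend a ω) := by
  suffices key : ∀ (s : Finset Ω) (hs : s.Nonempty) (a : Ω → Option X), indexSet a = s →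
      S a (∑ ω ∈ s, zeroExtend a ω) by
    rw [finsum_eq_sum_of_support_subset _ (hfin.coe_toFinset.symm ▸ support_zeroExtend_subset a)]
    exact key _ (hfin.toFinset_nonempty.mpr hne) a hfin.coe_toFinset.symm
  intro s hs
  induction hs using Finset.Nonempty.cons_induction with
  | singleton k =>
    intro a ha
    have h := summable_maskFam_singleton hsurj hmerge k (zeroExtend a)
    rwa [← Finset.coe_singleton, ← ha, maskFam_indexSet_zeroExtend,
      ← Finset.sum_singleton (zeroExtend a) k] at h
  | cons k s hks hs ih =>
    intro a ha
    have hka : a k = some (zeroExtend a k) := by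
      have : k ∈ indexSet a := by simp [ha]
      obtain ⟨u, hu⟩ := Option.ne_none_iff_exists'.mp this
      simp [zeroExtend, hu]
    have hrest := ih (restrictFam a s) (by rw [indexSet_restrictFam, ha]; simp)
    have hsum : ∑ ω ∈ s, zeroExtend (restrictFam a s) ω = ∑ ω ∈ s, zeroExtend a ω :=
      Finset.sum_congr rfl fun ω hω => by
        rw [zeroExtend_restrictFam, Set.indicator_of_mem (Finset.mem_coe.mpr hω)]
    have hext' := hext _ _ hrest k (zeroExtend a k) (by simp [restrictFam, hks])
    rwa [extendFam_restrictFam (by rw [ha]; simp) hka, hsum, add_comm,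
      ← Finset.sum_cons hks] at hext'

lemma eq_zero_of_summable_none (hfun : Relator.RightUnique S) (hsurj : Relator.RightTotal S)
    (hmerge : MergerOpt S) (hext : AddExtensionClosed S) {z : X}
    (hz : S (fun _ => none) z) : z = 0 := by
  rcases isEmpty_or_nonempty Ω with _ | ⟨⟨ω⟩⟩
  · obtain ⟨c, hc⟩ := hsurj 0
    exact hfun hz (Subsingleton.elim c (fun _ => none) ▸ hc)
  · have hsingle : extendFam (fun _ => none) ω (0 : X) = maskFam {ω} fun _ => 0 := by
      funext γ; by_cases hγ : γ = ω <;> simp [extendFam, maskFam, hγ]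
    have h := hext _ _ hz ω 0 rfl
    rw [hsingle, add_zero] at h
    exact hfun h (summable_maskFam_singleton hsurj hmerge ω _)

lemma eq_finsum_of_summable (hfun : Relator.RightUnique S) (hsurj : Relator.RightTotal S)
    (hmerge : MergerOpt S) (hext : AddExtensionClosed S) {a : Ω → Option X} {x : X}
    (hfin : (indexSet a).Finite) (ha : S a x) : x = ∑ᶠ ω, zeroExtend a ω := by
  rcases (indexSet a).eq_empty_or_nonempty with h | h
  · rw [indexSet_eq_empty_iff] at h
    subst h
    simpa [zeroExtend] using eq_zero_of_summable_none hfun hsurj hmerge hext ha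
  · exact hfun ha (summable_finsum_of_finite hsurj hmerge hext hfin h)

lemma summable_addFam_of_indexSet_eq_empty (hfun : Relator.RightUnique S)
    (hsurj : Relator.RightTotal S) (hmerge : MergerOpt S) (hext : AddExtensionClosed S)
    {a b : Ω → Option X} {x y : X} (h : indexSet a = ∅) (ha : S a x) (hb : S b y) :
    S (addFam a b) (x + y) := by
  rw [indexSet_eq_empty_iff] at h
  subst h
  rwa [addFam_none_left, eq_zero_of_summable_none hfun hsurj hmerge hext ha, zero_add]

lemma summable_addFam_of_finite (hfun : Relator.RightUnique S) (hsurj : Relator.RightTotal S)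
    (hmerge : MergerOpt S) (hext : AddExtensionClosed S) {a b : Ω → Option X} {x y : X}
    (hfa : (indexSet a).Finite) (hfb : (indexSet b).Finite) (ha : S a x) (hb : S b y) :
    S (addFam a b) (x + y) := by
  rcases (indexSet a).eq_empty_or_nonempty with h | h
  · exact summable_addFam_of_indexSet_eq_empty hfun hsurj hmerge hext h ha hb
  have hab := summable_finsum_of_finite hsurj hmerge hext (a := addFam a b)
    (by simpa [indexSet_addFam] using ⟨hfa, hfb⟩) (by simpa [indexSet_addFam] using Or.inl h)
  rwa [zeroExtend_addFam, Pi.add_def,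
    finsum_add_distrib (hfa.subset (support_zeroExtend_subset a))
      (hfb.subset (support_zeroExtend_subset b)),
    ← eq_finsum_of_summable hfun hsurj hmerge hext hfa ha,
    ← eq_finsum_of_summable hfun hsurj hmerge hext hfb hb] at hab

lemma eq_finsum_mem_of_summable_maskFam (hfun : Relator.RightUnique S)
    (hsurj : Relator.RightTotal S) (hmerge : MergerOpt S) (hext : AddExtensionClosed S)
    {K : Set Ω} {t : Ω → X} {z : X} (hK : K.Finite) (hz : S (maskFam K t) z) :
    z = ∑ᶠ k ∈ K, t k := by
  rw [eq_finsum_of_summable hfun hsurj hmerge hext (by rwa [indexSet_maskFam]) hz,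
    zeroExtend_maskFam, finsum_mem_def]

lemma summable_pushFam (hsurj : Relator.RightTotal S) (hmerge : MergerOpt S)
    (hext : AddExtensionClosed S) {a : Ω → Option X} {x : X} (ha : S a x) (p : Ω → Ω)
    (hfin : ∀ k, (indexSet a ∩ p ⁻¹' {k}).Finite) : S (pushFam p a) x := by
  refine summable_maskFam_image hmerge ha p _ fun k ⟨ω, hω, hωk⟩ => ?_
  have h := summable_finsum_of_finite hsurj hmerge hext (a := restrictFam a (p ⁻¹' {k}))
    (by rw [indexSet_restrictFam]; exact hfin k)
    (by rw [indexSet_restrictFam]; exact ⟨ω, hω, hωk⟩)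
  rwa [zeroExtend_restrictFam, ← finsum_mem_def] at h

lemma eq_add_of_summable_addFam (hfun : Relator.RightUnique S) (hsurj : Relator.RightTotal S)
    (hmerge : MergerOpt S) (hext : AddExtensionClosed S) {a b : Ω → Option X} {x y z : X}
    (ha : S a x) (hb : S b y) (hd : Disjoint (indexSet a) (indexSet b)) {k₁ k₂ : Ω}
    (hk₁ : k₁ ∈ indexSet a) (hk₂ : k₂ ∈ indexSet b) (hz : S (addFam a b) z) :
    z = x + y := by
  classical
  have hne : k₁ ≠ k₂ := hd.ne_of_mem hk₁ hk₂
  let p : Ω → Ω := fun ω => if ω ∈ indexSet a then k₁ else k₂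
  have hp₁ : p ⁻¹' {k₁} = indexSet a := by
    ext ω; by_cases h : a ω = none <;> simp [p, h, hne.symm]
  have hp₂ : p ⁻¹' {k₂} = (indexSet a)ᶜ := by
    ext ω; by_cases h : a ω = none <;> simp [p, h, hne]
  have himage : p '' indexSet (addFam a b) = {k₁, k₂} := by
    rw [indexSet_addFam, Set.image_union, Set.image_congr (g := fun _ => k₁) fun ω h => if_pos h,
      Set.image_congr (g := fun _ => k₂) fun ω h => if_neg (hd.notMem_of_mem_right h),
      Set.Nonempty.image_const ⟨k₁, hk₁⟩, Set.Nonempty.image_const ⟨k₂, hk₂⟩,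
      Set.singleton_union]
  let t : Ω → X := fun k => if k = k₁ then x else y
  have hsum := summable_maskFam_image hmerge hz p t fun k hk => by
    rw [himage] at hk
    rcases hk with rfl | rfl
    · simpa [hp₁, restrictFam_addFam_indexSet_left hd, t] using ha
    · simpa [hp₂, restrictFam_addFam_compl_indexSet_left hd, t, hne.symm] using hb
  rw [himage] at hsum
  rw [eq_finsum_mem_of_summable_maskFam hfun hsurj hmerge hext (Set.toFinite _) hsum,
    finsum_mem_pair hne]
  simp [t, hne.symm]

lemma summable_addFam_of_disjoint (hfun : Relator.RightUnique S)
    (hsurj : Relator.RightTotal S) (hmerge : MergerOpt S) (hext : AddExtensionClosed S)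
    (H : ∀ (a b : Ω → Option X) (x y : X), S a x → S b y → indexSet a ≠ indexSet b →
      ∃ z, S (addFam a b) z)
    {a b : Ω → Option X} {x y : X} (ha : S a x) (hb : S b y)
    (hd : Disjoint (indexSet a) (indexSet b)) (ha₀ : (indexSet a).Nonempty)
    (hb₀ : (indexSet b).Nonempty) : S (addFam a b) (x + y) := by
  obtain ⟨k₁, hk₁⟩ := ha₀
  obtain ⟨k₂, hk₂⟩ := hb₀
  obtain ⟨z, hz⟩ := H a b x y ha hb fun h => hd.ne_of_mem hk₁ (h ▸ hk₁) rfl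
  rwa [← eq_add_of_summable_addFam hfun hsurj hmerge hext ha hb hd hk₁ hk₂ hz]

lemma summable_addFam_of_infinite [Infinite Ω] (hfun : Relator.RightUnique S)
    (hsurj : Relator.RightTotal S) (hmerge : MergerOpt S) (hext : AddExtensionClosed S)
    (H : ∀ (a b : Ω → Option X) (x y : X), S a x → S b y → indexSet a ≠ indexSet b →
      ∃ z, S (addFam a b) z)
    {a b : Ω → Option X} {x y : X} (ha : S a x) (hb : S b y) : S (addFam a b) (x + y) := by
  rcases (indexSet a).eq_empty_or_nonempty with ha₀ | ha₀
  · exact summable_addFam_of_indexSet_eq_empty hfun hsurj hmerge hext ha₀ ha hb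
  rcases (indexSet b).eq_empty_or_nonempty with hb₀ | hb₀
  · rw [addFam_comm, add_comm]
    exact summable_addFam_of_indexSet_eq_empty hfun hsurj hmerge hext hb₀ hb ha
  obtain ⟨e⟩ : Nonempty (Ω ⊕ Ω ≃ Ω) := by
    rw [← Cardinal.eq, Cardinal.mk_sum, Cardinal.lift_id,
      Cardinal.add_eq_self (Cardinal.aleph0_le_mk Ω)]
  have hinl : (fun ω => e (.inl ω)).Injective := e.injective.comp Sum.inl_injective
  have hinr : (fun ω => e (.inr ω)).Injective := e.injective.comp Sum.inr_injective
  have ha' := summable_pushFam hsurj hmerge hext ha _ fun k =>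
    (Set.subsingleton_singleton.preimage hinl).finite.inter_of_right _
  have hb' := summable_pushFam hsurj hmerge hext hb _ fun k =>
    (Set.subsingleton_singleton.preimage hinr).finite.inter_of_right _
  have hd : Disjoint (indexSet (pushFam (fun ω => e (.inl ω)) a))
      (indexSet (pushFam (fun ω => e (.inr ω)) b)) := by
    rw [indexSet_pushFam, indexSet_pushFam, Set.disjoint_iff]
    rintro _ ⟨⟨ω, -, rfl⟩, ⟨ω', -, h⟩⟩
    exact Sum.inl_ne_inr (e.injective h).symm
  have hc := summable_addFam_of_disjoint hfun hsurj hmerge hext H ha' hb' hd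
    (by rw [indexSet_pushFam]; exact ha₀.image _) (by rw [indexSet_pushFam]; exact hb₀.image _)
  have hfold := summable_pushFam hsurj hmerge hext hc (fun γ => Sum.elim id id (e.symm γ))
    fun k => by rw [preimage_sumElim_id_id_symm_singleton]; exact (Set.toFinite _).inter_of_right _
  rwa [pushFam_sumElim_id_id_symm_addFam] at hfold

end SummationSystem

/-- Let `(X,+)` be an abelian group with a surjective summation
system `S` satisfying the monoid merger axiom and additive extension closure.  Then
addition functoriality holds iff `a + b` is summable whenever `a` and `b` are summable
families with distinct index sets. -/
theorem stmt_6 {X Ω : Type*} [AddCommGroup X]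
    (S : (Ω → Option X) → X → Prop)
    (hfun : ∀ a x y, S a x → S a y → x = y)
    (hsurj : ∀ x : X, ∃ a, S a x)
    (hmerge : MergerOpt S)
    (hext : ∀ (a : Ω → Option X) (x : X), S a x →
      ∀ (ℓ : Ω) (y : X), a ℓ = none → S (extendFam a ℓ y) (x + y)) :
    (∀ (a b : Ω → Option X) (x y : X), S a x → S b y →
      S (addFam a b) (x + y)) ↔
    (∀ (a b : Ω → Option X) (x y : X), S a x → S b y →
      {ω | a ω ≠ none} ≠ {ω | b ω ≠ none} → ∃ z, S (addFam a b) z) := by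
  refine ⟨fun h a b x y ha hb _ => ⟨x + y, h a b x y ha hb⟩, fun H a b x y ha hb => ?_⟩
  rcases finite_or_infinite Ω with _ | _
  · exact summable_addFam_of_finite hfun hsurj hmerge hext (Set.toFinite _) (Set.toFinite _) ha hb
  · exact summable_addFam_of_infinite hfun hsurj hmerge hext H ha hb
end

section
/- Let (X,+) be an abelian group with a summation system Σ whose index sets are sets of ordinals. Fix a family a : I → X (I a set of ordinals) all of whose proper initial segments (a_j)_{j∈I_{<i}} (i ∈ I) are summable, and define for each i ∈ I the partial sum s_i := Σ(a_j)_{j∈I_{<i}} + a_i and the partial sum family p(a) := (s_i)_{i∈I}. Then p(a) has a Σ-limit if and only if a is summable, and in that case lim p(a) = Σa. Moreover, the difference-family map d and the partial-sum map p are mutually inverse bijections between the collection of families all of whose initial segments are summable and the collection of families having Σ-limits. -/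
/-!
The partial sums `t i + a i` have, on each initial segment `I_{<i}`, the `Σ`-limit `t i`:
by transfinite induction their difference family there is `a` itself. Since `Σ`-limits are
unique, the difference family of the partial sums on all of `I` is `a` again, so `p(a)` has a
`Σ`-limit exactly when `a` is summable, with the same value.
-/

/-- The `Σ`-limit relation for a summation system `S` on families indexed by sets of
ordinals, defined by transfinite recursion: `x` is the `Σ`-limit of `s` on `I` iff the
limits `l i` of all proper initial segments exist and the difference family
`i ↦ s i - l i` is `S`-summable with sum `x`. -/
inductive SigmaLim {X : Type*} [AddCommGroup X]
    (S : Set Ordinal.{0} → (Ordinal.{0} → X) → X → Prop) :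
    Set Ordinal.{0} → (Ordinal.{0} → X) → X → Prop where
  | intro (I : Set Ordinal.{0}) (s l : Ordinal.{0} → X) (x : X)
      (hl : ∀ i ∈ I, SigmaLim S (I ∩ Set.Iio i) s (l i))
      (hd : S I (fun i => s i - l i) x) :
      SigmaLim S I s x

open Set

section

variable {X : Type*} [AddCommGroup X] {S : Set Ordinal.{0} → (Ordinal.{0} → X) → X → Prop}

lemma inter_Iio_inter_Iio {I : Set Ordinal.{0}} {i j : Ordinal.{0}} (hj : j < i) :
    I ∩ Iio i ∩ Iio j = I ∩ Iio j := by
  rw [inter_assoc, inter_eq_self_of_subset_right (Iio_subset_Iio hj.le)]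

namespace SigmaLim

lemma unique (hfun : ∀ I a x y, S I a x → S I a y → x = y)
    (hext : ∀ I a b x, (∀ i ∈ I, a i = b i) → S I a x → S I b x)
    {J : Set Ordinal.{0}} {s : Ordinal.{0} → X} {x y : X}
    (hx : SigmaLim S J s x) (hy : SigmaLim S J s y) : x = y := by
  induction hx generalizing y with
  | intro J s l x _ hd ih =>
    cases hy with
    | intro _ _ l' _ hl' hd' =>
      have hdiff : ∀ i ∈ J, s i - l' i = s i - l i := fun i hi => by rw [ih i hi (hl' i hi)]
      exact hfun J _ x y hd (hext J _ _ y hdiff hd')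

lemma sum_sub (hfun : ∀ I a x y, S I a x → S I a y → x = y)
    (hext : ∀ I a b x, (∀ i ∈ I, a i = b i) → S I a x → S I b x)
    {J : Set Ordinal.{0}} {s l : Ordinal.{0} → X} {y : X}
    (hy : SigmaLim S J s y) (hl : ∀ i ∈ J, SigmaLim S (J ∩ Iio i) s (l i)) :
    S J (fun i => s i - l i) y := by
  cases hy with
  | intro _ _ l₀ _ hl₀ hd =>
    refine hext _ _ _ _ (fun i hi => ?_) hd
    rw [unique hfun hext (hl₀ i hi) (hl i hi)]

lemma of_sum_of_forall_Iio (hext : ∀ I a b x, (∀ i ∈ I, a i = b i) → S I a x → S I b x)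
    {I : Set Ordinal.{0}} {a t : Ordinal.{0} → X} {x : X}
    (hl : ∀ i ∈ I, SigmaLim S (I ∩ Iio i) (fun j => t j + a j) (t i)) (hx : S I a x) :
    SigmaLim S I (fun j => t j + a j) x :=
  .intro _ _ t x hl (hext _ _ _ _ (fun j _ => by abel) hx)

variable {I : Set Ordinal.{0}} {a t : Ordinal.{0} → X}

lemma partialSums_Iio (hext : ∀ I a b x, (∀ i ∈ I, a i = b i) → S I a x → S I b x)
    (ht : ∀ i ∈ I, S (I ∩ Iio i) a (t i)) :
    ∀ i ∈ I, SigmaLim S (I ∩ Iio i) (fun j => t j + a j) (t i) := by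
  intro i
  induction i using WellFoundedLT.induction with
  | ind i ih =>
    intro hi
    refine of_sum_of_forall_Iio hext (fun j ⟨hjI, hji⟩ => ?_) (ht i hi)
    rw [inter_Iio_inter_Iio hji]
    exact ih j hji hjI

lemma partialSums_of_sum (hext : ∀ I a b x, (∀ i ∈ I, a i = b i) → S I a x → S I b x)
    (ht : ∀ i ∈ I, S (I ∩ Iio i) a (t i)) {x : X} (hx : S I a x) :
    SigmaLim S I (fun j => t j + a j) x :=
  of_sum_of_forall_Iio hext (partialSums_Iio hext ht) hx

lemma sum_of_partialSums (hfun : ∀ I a x y, S I a x → S I a y → x = y)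
    (hext : ∀ I a b x, (∀ i ∈ I, a i = b i) → S I a x → S I b x)
    (ht : ∀ i ∈ I, S (I ∩ Iio i) a (t i)) {l : X}
    (hl : SigmaLim S I (fun j => t j + a j) l) : S I a l :=
  hext _ _ _ _ (fun j _ => by abel) (sum_sub hfun hext hl (partialSums_Iio hext ht))

end SigmaLim

end

open SigmaLim in
/-- Let `(X,+)` be an abelian group with a summation system `S` on
ordinal-indexed families, and let `a` be a family on `I` all of whose proper initial
segments are summable, with sums `t i = Σ (a_j)_{j ∈ I_{<i}}`.  Then the partial-sum
family `p(a) = (t i + a i)_{i ∈ I}` has a `Σ`-limit iff `a` is summable, in which case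
the limit equals `Σ a`; moreover the difference-family and partial-sum constructions
are mutually inverse (`d(p(a)) = a` and `p(d(s)) = s` on the relevant index sets). -/
theorem stmt_7 {X : Type*} [AddCommGroup X]
    (S : Set Ordinal.{0} → (Ordinal.{0} → X) → X → Prop)
    (hfun : ∀ I a x y, S I a x → S I a y → x = y)
    (hext : ∀ I a b x, (∀ i ∈ I, a i = b i) → S I a x → S I b x)
    (I : Set Ordinal.{0}) (a t : Ordinal.{0} → X)
    (ht : ∀ i ∈ I, S (I ∩ Set.Iio i) a (t i)) :
    ((∃ l, SigmaLim S I (fun i => t i + a i) l) ↔ ∃ x, S I a x) ∧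
    (∀ x, S I a x → SigmaLim S I (fun i => t i + a i) x) ∧
    (∀ l x, SigmaLim S I (fun i => t i + a i) l → S I a x → l = x) ∧
    (∀ i ∈ I, ∀ l, SigmaLim S (I ∩ Set.Iio i) (fun j => t j + a j) l →
      t i + a i - l = a i) ∧
    (∀ (s l : Ordinal.{0} → X),
      (∀ i ∈ I, SigmaLim S (I ∩ Set.Iio i) s (l i)) →
      (∃ y, SigmaLim S I s y) →
      ∀ i ∈ I, ∀ v, S (I ∩ Set.Iio i) (fun j => s j - l j) v →
        v + (s i - l i) = s i) := by
  refine ⟨⟨fun ⟨l, hl⟩ => ⟨l, sum_of_partialSums hfun hext ht hl⟩,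
      fun ⟨x, hx⟩ => ⟨x, partialSums_of_sum hext ht hx⟩⟩,
    fun x hx => partialSums_of_sum hext ht hx,
    fun l x hl hx => unique hfun hext hl (partialSums_of_sum hext ht hx), ?_, ?_⟩
  · intro i hi l hl
    rw [unique hfun hext hl (partialSums_Iio hext ht i hi)]
    abel
  · rintro s l hl - i hi v hv
    have hli : S (I ∩ Iio i) (fun j => s j - l j) (l i) :=
      sum_sub hfun hext (hl i hi) fun j ⟨hjI, hji⟩ => by
        rw [inter_Iio_inter_Iio hji]
        exact hl j hjI
    rw [hfun _ _ v (l i) hv hli]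
    abel
end

section
/- Let (X, τ) be a topological space and let φ(τ) denote the finest topology on X in which, for every nonempty ordinal-indexed sequence s : I → X all of whose nonempty initial segments (including s itself) have unique τ-limits, the unique τ-limit x of s is a topological limit of s. Then: (1) φ(τ) is T1 (every singleton is φ(τ)-closed); (2) every τ-open set is φ(τ)-open; and (3) φ(φ(τ)) = φ(τ). -/
open Topology

/-- `x` is a topological limit (in the topology `τ`) of the ordinal-indexed sequence
`s` with index set `I`. -/
def IsLimOn {X : Type*} (τ : TopologicalSpace X) (I : Set Ordinal.{0})
    (s : Ordinal.{0} → X) (x : X) : Prop :=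
  ∀ U : Set X, IsOpen[τ] U → x ∈ U → ∃ i ∈ I, ∀ j ∈ I, i ≤ j → s j ∈ U

/-- The pair `(s, x)` (with `s` a nonempty ordinal-indexed sequence on `I`) is such
that every nonempty initial segment of `s` (including `s` itself) has a unique
`τ`-limit, and `x` is the (unique) `τ`-limit of `s`. -/
def GaplessUnique {X : Type*} (τ : TopologicalSpace X) (I : Set Ordinal.{0})
    (s : Ordinal.{0} → X) (x : X) : Prop :=
  I.Nonempty ∧
  (∀ α : Ordinal.{0}, (I ∩ Set.Iio α).Nonempty →
    ∃! y, IsLimOn τ (I ∩ Set.Iio α) s y) ∧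
  IsLimOn τ I s x

/-- `phiTop τ` is the finest topology in which, for every `(s,x)` as above, `x` is a
topological limit of `s`; concretely it is generated by the sets `U` such that any
such sequence with limit in `U` has a tail in `U`. -/
def phiTop {X : Type*} (τ : TopologicalSpace X) : TopologicalSpace X :=
  TopologicalSpace.generateFrom
    {U | ∀ (I : Set Ordinal.{0}) (s : Ordinal.{0} → X) (x : X),
      GaplessUnique τ I s x → x ∈ U → ∃ i ∈ I, ∀ j ∈ I, i ≤ j → s j ∈ U}

/-!
The sets in which every sequence of `D(τ)` eventually lies are closed under finite
intersections and arbitrary unions, so they are exactly the `φ(τ)`-open sets. If a sequence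
of `D(τ)` with limit `y` took a value `x` cofinally, every neighbourhood of `y` would contain
`x`; the initial segment ending at an occurrence of `x` then has both `x` and `y` as limits,
so `y = x`, which makes `{x}ᶜ` open in `φ(τ)`. Finally `φ(τ)` is finer than `τ` and keeps the
limits of `D(τ)`, so `D(τ) ⊆ D(φ(τ))`, whence `φ(φ(τ)) = φ(τ)`.
-/

open Set

section

variable {X : Type*} {τ T : TopologicalSpace X} {I : Set Ordinal.{0}} {s : Ordinal.{0} → X}
  {x y : X}

theorem IsLimOn.mono (hle : τ ≤ T) (h : IsLimOn τ I s x) : IsLimOn T I s x :=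
  fun U hU hx => h U (TopologicalSpace.le_def.1 hle U hU) hx

theorem IsLimOn.nonempty (h : IsLimOn τ I s x) : I.Nonempty :=
  let ⟨i, hi, _⟩ := h univ isOpen_univ (mem_univ x)
  ⟨i, hi⟩

theorem isLimOn_of_isGreatest {j : Ordinal.{0}} (hj : IsGreatest I j)
    (h : ∀ U, IsOpen[τ] U → x ∈ U → s j ∈ U) : IsLimOn τ I s x := fun U hU hx =>
  ⟨j, hj.1, fun _ hk hjk => le_antisymm (hj.2 hk) hjk ▸ h U hU hx⟩

theorem GaplessUnique.inter_Iio (h : GaplessUnique τ I s x) {α : Ordinal.{0}}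
    (hy : IsLimOn τ (I ∩ Iio α) s y) : GaplessUnique τ (I ∩ Iio α) s y := by
  refine ⟨hy.nonempty, fun β hβ => ?_, hy⟩
  have hseg : I ∩ Iio α ∩ Iio β = I ∩ Iio (min α β) := by
    rw [inter_assoc, Iio_inter_Iio]
  rw [hseg] at hβ ⊢
  exact h.2.1 _ hβ

theorem GaplessUnique.eq_of_frequently (h : GaplessUnique τ I s y)
    (hx : ∀ i ∈ I, ∃ j ∈ I, i ≤ j ∧ s j = x) : y = x := by
  have hyx : ∀ U, IsOpen[τ] U → y ∈ U → x ∈ U := fun U hU hyU => by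
    obtain ⟨i, hi, htail⟩ := h.2.2 U hU hyU
    obtain ⟨j, hj, hij, rfl⟩ := hx i hi
    exact htail j hj hij
  obtain ⟨j, hj, -, hjx⟩ := hx _ h.1.some_mem
  have hgreatest : IsGreatest (I ∩ Iio (Order.succ j)) j :=
    ⟨⟨hj, Order.lt_succ j⟩, fun k hk => Order.lt_succ_iff.1 hk.2⟩
  obtain ⟨z, -, hz⟩ := h.2.1 _ ⟨j, hgreatest.1⟩
  have hy : IsLimOn τ _ s y := isLimOn_of_isGreatest hgreatest (hjx ▸ hyx)
  have hx : IsLimOn τ _ s x := isLimOn_of_isGreatest hgreatest fun _ _ hU => hjx ▸ hU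
  rw [hz y hy, hz x hx]

variable (τ) in
def tailTopology : TopologicalSpace X where
  IsOpen U := ∀ (I : Set Ordinal.{0}) (s : Ordinal.{0} → X) (x : X),
    GaplessUnique τ I s x → x ∈ U → ∃ i ∈ I, ∀ j ∈ I, i ≤ j → s j ∈ U
  isOpen_univ _ _ _ h _ := ⟨_, h.1.some_mem, fun _ _ _ => trivial⟩
  isOpen_inter U V hU hV I s x h hx := by
    obtain ⟨i₁, hi₁, h₁⟩ := hU I s x h hx.1
    obtain ⟨i₂, hi₂, h₂⟩ := hV I s x h hx.2
    rcases le_total i₁ i₂ with hle | hle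
    · exact ⟨i₂, hi₂, fun j hj hij => ⟨h₁ j hj (hle.trans hij), h₂ j hj hij⟩⟩
    · exact ⟨i₁, hi₁, fun j hj hij => ⟨h₁ j hj hij, h₂ j hj (hle.trans hij)⟩⟩
  isOpen_sUnion 𝒮 h𝒮 I s x h := by
    rintro ⟨U, hU, hxU⟩
    obtain ⟨i, hi, htail⟩ := h𝒮 U hU I s x h hxU
    exact ⟨i, hi, fun j hj hij => ⟨U, hU, htail j hj hij⟩⟩

variable (τ) in
theorem phiTop_eq_tailTopology : phiTop τ = tailTopology τ :=
  TopologicalSpace.generateFrom_setOfPred_isOpen (tailTopology τ)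

variable (τ) in
theorem isOpen_phiTop_iff (U : Set X) :
    IsOpen[phiTop τ] U ↔ ∀ (I : Set Ordinal.{0}) (s : Ordinal.{0} → X) (x : X),
      GaplessUnique τ I s x → x ∈ U → ∃ i ∈ I, ∀ j ∈ I, i ≤ j → s j ∈ U := by
  rw [phiTop_eq_tailTopology]
  rfl

theorem isLimOn_phiTop (h : GaplessUnique τ I s x) : IsLimOn (phiTop τ) I s x :=
  fun U hU hx => (isOpen_phiTop_iff τ U).1 hU I s x h hx

theorem phiTop_le_of_forall_isLimOn
    (hT : ∀ (I : Set Ordinal.{0}) (s : Ordinal.{0} → X) (x : X),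
      GaplessUnique τ I s x → IsLimOn T I s x) : phiTop τ ≤ T :=
  TopologicalSpace.le_def.2 fun U hU =>
    (isOpen_phiTop_iff τ U).2 fun I s x h hx => hT I s x h U hU hx

variable (τ) in
theorem phiTop_le : phiTop τ ≤ τ :=
  phiTop_le_of_forall_isLimOn fun _ _ _ h => h.2.2

variable (τ) in
theorem isClosed_phiTop_singleton (x : X) : IsClosed[phiTop τ] {x} := by
  rw [← @isOpen_compl_iff _ _ (phiTop τ), isOpen_phiTop_iff]
  intro I s y h hy
  by_contra! hfreq
  simp only [mem_compl_iff, mem_singleton_iff, not_not] at hfreq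
  exact hy (h.eq_of_frequently hfreq)

theorem GaplessUnique.phiTop (h : GaplessUnique τ I s x) : GaplessUnique (phiTop τ) I s x := by
  refine ⟨h.1, fun α hα => ?_, isLimOn_phiTop h⟩
  obtain ⟨y, hy, huniq⟩ := h.2.1 α hα
  exact ⟨y, isLimOn_phiTop (h.inter_Iio hy), fun z hz => huniq z (hz.mono (phiTop_le τ))⟩

variable (τ) in
theorem phiTop_phiTop : phiTop (phiTop τ) = phiTop τ :=
  le_antisymm (phiTop_le_of_forall_isLimOn fun _ _ _ h => h.2.2)
    (phiTop_le_of_forall_isLimOn fun _ _ _ h => isLimOn_phiTop h.phiTop)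

end

/-- `phiTop τ` is exactly the topology whose open sets are those
satisfying the tail condition, it has all the prescribed limits and is the finest such
topology; moreover (1) `phiTop τ` is T1, (2) it refines `τ`, and (3) `phiTop` is
idempotent. -/
theorem stmt_8 {X : Type*} (τ : TopologicalSpace X) :
    (∀ U : Set X, IsOpen[phiTop τ] U ↔
      ∀ (I : Set Ordinal.{0}) (s : Ordinal.{0} → X) (x : X),
        GaplessUnique τ I s x → x ∈ U → ∃ i ∈ I, ∀ j ∈ I, i ≤ j → s j ∈ U) ∧
    (∀ (I : Set Ordinal.{0}) (s : Ordinal.{0} → X) (x : X),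
      GaplessUnique τ I s x → IsLimOn (phiTop τ) I s x) ∧
    (∀ T : TopologicalSpace X,
      (∀ (I : Set Ordinal.{0}) (s : Ordinal.{0} → X) (x : X),
        GaplessUnique τ I s x → IsLimOn T I s x) →
      ∀ U : Set X, IsOpen[T] U → IsOpen[phiTop τ] U) ∧
    (∀ x : X, IsClosed[phiTop τ] {x}) ∧
    (∀ U : Set X, IsOpen[τ] U → IsOpen[phiTop τ] U) ∧
    phiTop (phiTop τ) = phiTop τ :=
  ⟨isOpen_phiTop_iff τ, fun _ _ _ => isLimOn_phiTop,
    fun _ hT => TopologicalSpace.le_def.1 (phiTop_le_of_forall_isLimOn hT),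
    isClosed_phiTop_singleton τ, TopologicalSpace.le_def.1 (phiTop_le τ), phiTop_phiTop τ⟩
end

section
/- Let (X,+) be an abelian group and 𝒜 a collection of subsets of X such that for each S ∈ 𝒜 there exist T, U ∈ 𝒜 with T − U ⊆ S. Let a : I → X be a family with unconditional sum x ∈ X, let P be a partition of I, and assume that for each block J ∈ P the restricted family (a_i)_{i∈J} has unconditional sum s_J ∈ X. Then x is an unconditional sum of the family (s_J)_{J∈P} indexed by P. -/
/-!
Given `S`, pick `T, U` with `T - U ⊆ S` and a finite `F_T ⊆ I` controlling `∑ a - x` in `T`.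
For a finite set `F'` of blocks covering `F_T`, split `U` into sets `V J` (`J ∈ F'`) whose
elements sum into `U` (possible since every member of `A` contains `0`, `a` having a sum), and
choose for each block a finite set controlling its partial sums in `V J`, enlarged by `F_T ∩ J`.
On the union `G` of these sets, `∑_G a - x ∈ T` and
`∑_G a - ∑_{J ∈ F'} s J = ∑_{J ∈ F'} (∑_{G ∩ J} a - s J) ∈ U`;
subtracting gives `∑_{J ∈ F'} s J - x ∈ S`.
-/

/-- `x` is an unconditional sum of the family `a : I → X` relative to the collection
`A` of subsets of `X`. -/
def UncondSum {X : Type*} [AddCommGroup X] (A : Set (Set X)) {I : Type*}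
    (a : I → X) (x : X) : Prop :=
  ∀ S ∈ A, ∃ F : Finset I, ∀ F' : Finset I, F ⊆ F' → (∑ i ∈ F', a i) - x ∈ S

open Finset

section UncondSum

variable {X : Type*} [AddCommGroup X] {A : Set (Set X)}

theorem UncondSum.zero_mem {I : Type*} {a : I → X} {x : X} (hx : UncondSum A a x)
    (h2 : ∀ S ∈ A, ∃ T ∈ A, ∃ U ∈ A, ∀ t ∈ T, ∀ u ∈ U, t - u ∈ S) :
    ∀ S ∈ A, (0 : X) ∈ S := by
  classical
  intro S hS
  obtain ⟨T, hT, U, hU, hTU⟩ := h2 S hS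
  obtain ⟨F₁, h₁⟩ := hx T hT
  obtain ⟨F₂, h₂⟩ := hx U hU
  simpa using hTU _ (h₁ (F₁ ∪ F₂) subset_union_left) _ (h₂ (F₁ ∪ F₂) subset_union_right)

theorem exists_add_mem_of_sub_mem
    (h2 : ∀ S ∈ A, ∃ T ∈ A, ∃ U ∈ A, ∀ t ∈ T, ∀ u ∈ U, t - u ∈ S)
    (hzero : ∀ S ∈ A, (0 : X) ∈ S) :
    ∀ S ∈ A, ∃ T ∈ A, ∃ U ∈ A, ∀ t ∈ T, ∀ u ∈ U, t + u ∈ S := by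
  intro S hS
  obtain ⟨T, hT, U, hU, hTU⟩ := h2 S hS
  obtain ⟨T', hT', U', hU', hTU'⟩ := h2 U hU
  have hneg : ∀ u ∈ U', -u ∈ U := fun u hu => by simpa using hTU' 0 (hzero T' hT') u hu
  exact ⟨T, hT, U', hU', fun t ht u hu => by simpa using hTU t ht (-u) (hneg u hu)⟩

theorem exists_forall_sum_mem
    (hadd : ∀ S ∈ A, ∃ T ∈ A, ∃ U ∈ A, ∀ t ∈ T, ∀ u ∈ U, t + u ∈ S)
    (hzero : ∀ S ∈ A, (0 : X) ∈ S) {ι : Type*} (F : Finset ι) :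
    ∀ U ∈ A, ∃ V : ι → Set X, (∀ k, V k ∈ A) ∧
      ∀ v : ι → X, (∀ k ∈ F, v k ∈ V k) → ∑ k ∈ F, v k ∈ U := by
  classical
  induction F using Finset.induction with
  | empty => exact fun U hU => ⟨fun _ => U, fun _ => hU, fun v _ => by simpa using hzero U hU⟩
  | @insert k F hk ih =>
    intro U hU
    obtain ⟨T, hT, U', hU', hTU'⟩ := hadd U hU
    obtain ⟨V, hVA, hV⟩ := ih U' hU'
    refine ⟨Function.update V k T, fun j => ?_, fun v hv => ?_⟩
    · by_cases hj : j = k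
      · simpa [hj] using hT
      · simpa [hj] using hVA j
    · rw [sum_insert hk]
      refine hTU' _ (by simpa using hv k (mem_insert_self k F)) _ (hV v fun j hj => ?_)
      have hjk : j ≠ k := fun h => hk (h ▸ hj)
      simpa [hjk] using hv j (mem_insert_of_mem hj)

end UncondSum

theorem Finset.sum_biUnion_map_subtype {I M : Type*} [AddCommMonoid M] [DecidableEq I]
    {P : Set (Set I)} (hP : P.PairwiseDisjoint id) (F : Finset P)
    (H : ∀ J : P, Finset J.1) (a : I → M) :
    ∑ i ∈ F.biUnion (fun J => (H J).map (Function.Embedding.subtype _)), a i =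
      ∑ J ∈ F, ∑ j ∈ H J, a j := by
  rw [sum_biUnion]
  · simp only [sum_map, Function.Embedding.coe_subtype]
  · intro J _ K _ hJK
    simp only [Function.onFun, disjoint_left, mem_map, Function.Embedding.coe_subtype]
    rintro _ ⟨j, -, rfl⟩ ⟨k, -, hkj⟩
    exact Set.disjoint_left.mp (hP J.2 K.2 (Subtype.coe_injective.ne hJK)) j.2 (hkj ▸ k.2)

theorem UncondSum.sum_blocks {X : Type*} [AddCommGroup X] {A : Set (Set X)}
    (h2 : ∀ S ∈ A, ∃ T ∈ A, ∃ U ∈ A, ∀ t ∈ T, ∀ u ∈ U, t - u ∈ S)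
    {I : Type*} {a : I → X} {x : X} (hx : UncondSum A a x)
    {P : Set (Set I)} (hdisj : P.PairwiseDisjoint id) (hcover : ∀ i, ∃ J ∈ P, i ∈ J)
    {s : Set I → X} (hs : ∀ J ∈ P, UncondSum A (fun j : J => a j.1) (s J)) :
    UncondSum A (fun J : P => s J.1) x := by
  classical
  intro S hS
  obtain ⟨T, hT, U, hU, hTU⟩ := h2 S hS
  obtain ⟨FT, hFT⟩ := hx T hT
  choose B hBP hB using hcover
  refine ⟨FT.image fun i => ⟨B i, hBP i⟩, fun F' hF' => ?_⟩
  have hzero := hx.zero_mem h2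
  obtain ⟨V, hVA, hV⟩ := exists_forall_sum_mem (exists_add_mem_of_sub_mem h2 hzero) hzero F' U hU
  choose H0 hH0 using fun J : P => hs J.1 J.2 (V J) (hVA J)
  let H : ∀ J : P, Finset J.1 := fun J => H0 J ∪ FT.subtype (· ∈ J.1)
  let G : Finset I := F'.biUnion fun J => (H J).map (Function.Embedding.subtype _)
  have hFTG : FT ⊆ G := fun i hi => mem_biUnion.mpr
    ⟨⟨B i, hBP i⟩, hF' (mem_image_of_mem _ hi),
      mem_map.mpr ⟨⟨i, hB i⟩, mem_union_right _ (mem_subtype.mpr hi), rfl⟩⟩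
  have hGU : ∑ i ∈ G, a i - ∑ J ∈ F', s J.1 ∈ U := by
    rw [sum_biUnion_map_subtype hdisj, ← sum_sub_distrib]
    exact hV _ fun J _ => hH0 J (H J) subset_union_left
  simpa using hTU _ (hFT G hFTG) _ hGU

theorem stmt_11_general {X : Type*} [AddCommGroup X] (A : Set (Set X))
    (h2 : ∀ S ∈ A, ∃ T ∈ A, ∃ U ∈ A, ∀ t ∈ T, ∀ u ∈ U, t - u ∈ S)
    (I : Type) (a : I → X) (x : X) (hx : UncondSum A a x)
    (P : Set (Set I))
    (hpart : ∀ i : I, ∃! J, J ∈ P ∧ i ∈ J)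
    (s : Set I → X)
    (hs : ∀ J ∈ P, UncondSum A (fun j : J => a j.1) (s J)) :
    UncondSum A (fun J : P => s J.1) x :=
  hx.sum_blocks h2 (Setoid.eqv_classes_disjoint hpart) (fun i => (hpart i).exists) hs

/-- Assume for each `S ∈ A` there are `T, U ∈ A` with `T - U ⊆ S`.
If `a : I → X` has unconditional sum `x`, `P` is a partition of `I`, and each block
`J ∈ P` has unconditional sum `s J`, then `x` is an unconditional sum of the family
`(s J)_{J ∈ P}`. -/
theorem stmt_11 {X : Type*} [AddCommGroup X] (A : Set (Set X))
    (h2 : ∀ S ∈ A, ∃ T ∈ A, ∃ U ∈ A, ∀ t ∈ T, ∀ u ∈ U, t - u ∈ S)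
    (I : Type) (a : I → X) (x : X) (hx : UncondSum A a x)
    (P : Set (Set I))
    (hne : ∀ J ∈ P, J.Nonempty)
    (hpart : ∀ i : I, ∃! J, J ∈ P ∧ i ∈ J)
    (s : Set I → X)
    (hs : ∀ J ∈ P, UncondSum A (fun j : J => a j.1) (s J)) :
    UncondSum A (fun J : P => s J.1) x :=
  stmt_11_general A h2 I a x hx P hpart s hs
end

section
/- Let (X,+) be an abelian group and 𝒜 a collection of subsets of X such that for each S ∈ 𝒜 there exist T, U ∈ 𝒜 with T − U ⊆ S. Call a family a : I → X sum-Cauchy if for each S ∈ 𝒜 there is a finite set F ⊆ I such that for every finite set F' ⊆ I with F ∩ F' = ∅ one has ∑_{i∈F'} a i ∈ S. Then: (1) every family possessing an unconditional sum relative to 𝒜 is sum-Cauchy; and (2) every sum-Cauchy family possesses an unconditional sum if and only if every restriction of a family possessing an unconditional sum to a subset of its index set again possesses an unconditional sum. -/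
/-- The family `a` is sum-Cauchy relative to `A`: for each `S ∈ A` there is a finite
`F ⊆ I` such that every finite `F' ⊆ I` disjoint from `F` has `∑_{i ∈ F'} a i ∈ S`. -/
def SumCauchy {X : Type*} [AddCommGroup X] (A : Set (Set X)) {I : Type*}
    (a : I → X) : Prop :=
  ∀ S ∈ A, ∃ F : Finset I, ∀ F' : Finset I, Disjoint F F' → (∑ i ∈ F', a i) ∈ S

def HasDiffRefinements {X : Type*} [AddCommGroup X] (A : Set (Set X)) : Prop :=
  ∀ S ∈ A, ∃ T ∈ A, ∃ U ∈ A, ∀ t ∈ T, ∀ u ∈ U, t - u ∈ S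

section

variable {X : Type*} [AddCommGroup X] {A : Set (Set X)} {I J : Type*}

theorem UncondSum.comp_equiv {b : J → X} {x : X} (h : UncondSum A b x) (e : I ≃ J) :
    UncondSum A (b ∘ e) x := by
  intro S hS
  obtain ⟨F, hF⟩ := h S hS
  refine ⟨F.map e.symm.toEmbedding, fun F' hF' => ?_⟩
  have hsub : F ⊆ F'.map e.toEmbedding := fun j hj =>
    Finset.mem_map.2 ⟨e.symm j, hF' (Finset.mem_map_of_mem _ hj), e.apply_symm_apply j⟩
  have hmem := hF _ hsub
  rwa [Finset.sum_map] at hmem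

theorem UncondSum.sumCauchy (hA : HasDiffRefinements A) {a : I → X} {x : X}
    (hx : UncondSum A a x) : SumCauchy A a := by
  classical
  intro S hS
  obtain ⟨T, hT, U, hU, hTU⟩ := hA S hS
  obtain ⟨F₁, h₁⟩ := hx T hT
  obtain ⟨F₂, h₂⟩ := hx U hU
  refine ⟨F₁ ∪ F₂, fun F' hd => ?_⟩
  have hbig : (∑ i ∈ (F₁ ∪ F₂) ∪ F', a i) - x ∈ T :=
    h₁ _ (Finset.subset_union_left.trans Finset.subset_union_left)
  have hsmall : (∑ i ∈ F₁ ∪ F₂, a i) - x ∈ U := h₂ _ Finset.subset_union_right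
  have hmem := hTU _ hbig _ hsmall
  rw [Finset.sum_union hd] at hmem
  simpa using hmem

theorem SumCauchy.comp_injective {a : J → X} (h : SumCauchy A a) {f : I → J}
    (hf : f.Injective) : SumCauchy A (a ∘ f) := by
  classical
  intro S hS
  obtain ⟨F, hF⟩ := h S hS
  refine ⟨F.preimage f hf.injOn, fun G hd => ?_⟩
  have hd' : Disjoint F (G.map ⟨f, hf⟩) := by
    rw [Finset.disjoint_left]
    rintro _ hiF hiG
    obtain ⟨j, hjG, rfl⟩ := Finset.mem_map.1 hiG
    exact Finset.disjoint_left.1 hd (Finset.mem_preimage.2 hiF) hjG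
  have hmem := hF _ hd'
  rwa [Finset.sum_map] at hmem

theorem SumCauchy.sum_sub_sum_mem (hA : HasDiffRefinements A) {a : I → X}
    (h : SumCauchy A a) {S : Set X} (hS : S ∈ A) :
    ∃ F : Finset I, ∀ G₁ G₂ : Finset I, F ⊆ G₁ → F ⊆ G₂ →
      (∑ i ∈ G₁, a i) - ∑ i ∈ G₂, a i ∈ S := by
  classical
  obtain ⟨T, hT, U, hU, hTU⟩ := hA S hS
  obtain ⟨F₁, h₁⟩ := h T hT
  obtain ⟨F₂, h₂⟩ := h U hU
  refine ⟨F₁ ∪ F₂, fun G₁ G₂ hG₁ hG₂ => ?_⟩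
  have hd₁ : Disjoint F₁ (G₁ \ G₂) :=
    Finset.disjoint_of_subset_left (Finset.subset_union_left.trans hG₂) Finset.disjoint_sdiff
  have hd₂ : Disjoint F₂ (G₂ \ G₁) :=
    Finset.disjoint_of_subset_left (Finset.subset_union_right.trans hG₁) Finset.disjoint_sdiff
  rw [← Finset.sum_sdiff_sub_sum_sdiff]
  exact hTU _ (h₁ _ hd₁) _ (h₂ _ hd₂)

theorem SumCauchy.uncondSum_sumElim_neg (hA : HasDiffRefinements A) {a : I → X}
    (h : SumCauchy A a) : UncondSum A (Sum.elim a (-a)) 0 := by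
  intro S hS
  obtain ⟨F, hF⟩ := h.sum_sub_sum_mem hA hS
  refine ⟨F.disjSum F, fun F' hF' => ?_⟩
  have hleft : F ⊆ F'.toLeft := fun i hi =>
    Finset.mem_toLeft.2 (hF' (Finset.inl_mem_disjSum.2 hi))
  have hright : F ⊆ F'.toRight := fun i hi =>
    Finset.mem_toRight.2 (hF' (Finset.inr_mem_disjSum.2 hi))
  rw [Finset.sum_sum_eq_sum_toLeft_add_sum_toRight]
  simpa [sub_eq_add_neg] using hF _ _ hleft hright

end

/-- Assume for each `S ∈ A` there are `T, U ∈ A` with `T - U ⊆ S`.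
Then (1) every unconditionally summable family is sum-Cauchy, and (2) every sum-Cauchy
family is unconditionally summable iff every restriction of an unconditionally
summable family is unconditionally summable. -/
theorem stmt_12 {X : Type*} [AddCommGroup X] (A : Set (Set X))
    (h2 : ∀ S ∈ A, ∃ T ∈ A, ∃ U ∈ A, ∀ t ∈ T, ∀ u ∈ U, t - u ∈ S) :
    (∀ (I : Type) (a : I → X) (x : X), UncondSum A a x → SumCauchy A a) ∧
    ((∀ (I : Type) (a : I → X), SumCauchy A a → ∃ x, UncondSum A a x) ↔
      (∀ (I : Type) (a : I → X), (∃ x, UncondSum A a x) →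
        ∀ s : Set I, ∃ y, UncondSum A (fun i : s => a i.1) y)) := by
  refine ⟨fun I a x hx => hx.sumCauchy h2, ⟨?_, ?_⟩⟩
  · rintro H I a ⟨x, hx⟩ s
    exact H s _ ((hx.sumCauchy h2).comp_injective Subtype.val_injective)
  · intro H I a ha
    obtain ⟨y, hy⟩ := H (I ⊕ I) _ ⟨0, ha.uncondSum_sumElim_neg h2⟩ (Set.range Sum.inl)
    exact ⟨y, hy.comp_equiv (Equiv.ofInjective _ Sum.inl_injective)⟩
end

section
/- Let (X,+) be an abelian group. For 𝒜 ⊆ 𝒫(X), let Σ_𝒜 be the collection of pairs (a, x) such that x is the unique unconditional sum of the family a relative to 𝒜, and let ψ(𝒜) be the largest collection 𝒞 ⊆ 𝒫(X) such that every pair in Σ_𝒜 is an unconditional sum relative to 𝒞 (namely 𝒞 = {S ⊆ X : each pair in Σ_𝒜 satisfies the unconditional summability condition for S}). Then: (1) 𝒜 ⊆ ψ(𝒜) and ψ(ψ(𝒜)) = ψ(𝒜); (2) Σ_𝒜 ⊆ Σ_{ψ(𝒜)}; and (3) if unconditional sums relative to 𝒜 are unique whenever they exist, then Σ_𝒜 =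 Σ_{ψ(𝒜)}, and for every ℬ with 𝒜 ⊆ ℬ ⊆ 𝒫(X) one has ψ(𝒜) ⊆ ψ(ℬ). -/
/-- `x` is the unique unconditional sum of `a` relative to `A` (membership in the
unconditional summation system `Σ_A`). -/
def UniqueUncond {X : Type*} [AddCommGroup X] (A : Set (Set X)) {I : Type*}
    (a : I → X) (x : X) : Prop :=
  UncondSum A a x ∧ ∀ y, UncondSum A a y → y = x

/-- `psiColl A` is the largest collection of subsets of `X` relative to which every
pair of `Σ_A` is an unconditional sum. -/
def psiColl {X : Type*} [AddCommGroup X] (A : Set (Set X)) : Set (Set X) :=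
  {S | ∀ (I : Type) (a : I → X) (x : X), UniqueUncond A a x →
    ∃ F : Finset I, ∀ F' : Finset I, F ⊆ F' → (∑ i ∈ F', a i) - x ∈ S}

section

variable {X : Type*} [AddCommGroup X] {A B : Set (Set X)}

theorem UncondSum.anti {I : Type*} {a : I → X} {x : X} (hAB : A ⊆ B)
    (h : UncondSum B a x) : UncondSum A a x :=
  fun S hS => h S (hAB hS)

theorem UniqueUncond.uncondSum_psiColl {I : Type} {a : I → X} {x : X}
    (h : UniqueUncond A a x) : UncondSum (psiColl A) a x :=
  fun _ hS => hS I a x h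

theorem subset_psiColl : A ⊆ psiColl A :=
  fun S hS _ _ _ hx => hx.1 S hS

theorem UniqueUncond.psiColl {I : Type} {a : I → X} {x : X}
    (h : UniqueUncond A a x) : UniqueUncond (psiColl A) a x :=
  ⟨h.uncondSum_psiColl, fun y hy => h.2 y (hy.anti subset_psiColl)⟩

theorem psiColl_psiColl : psiColl (psiColl A) = psiColl A :=
  Set.Subset.antisymm (fun _ hS I a x hx => hS I a x hx.psiColl) subset_psiColl

theorem uniqueUncond_of_uncondSum {I : Type*} {a : I → X} {x : X}
    (huniq : ∀ y z, UncondSum A a y → UncondSum A a z → y = z)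
    (h : UncondSum A a x) : UniqueUncond A a x :=
  ⟨h, fun y hy => huniq y x hy h⟩

theorem uniqueUncond_iff_psiColl {I : Type} {a : I → X} {x : X}
    (huniq : ∀ y z, UncondSum A a y → UncondSum A a z → y = z) :
    UniqueUncond A a x ↔ UniqueUncond (psiColl A) a x :=
  ⟨UniqueUncond.psiColl,
    fun h => uniqueUncond_of_uncondSum huniq (h.1.anti subset_psiColl)⟩

theorem psiColl_mono_of_uniqueness
    (huniq : ∀ (I : Type) (a : I → X) (y z : X),
      UncondSum A a y → UncondSum A a z → y = z)
    (hAB : A ⊆ B) : psiColl A ⊆ psiColl B :=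
  fun _ hS I a x hx =>
    hS I a x (uniqueUncond_of_uncondSum (huniq I a) (hx.1.anti hAB))

end

/-- (1) `ψ` is extensive and idempotent; (2) `Σ_A ⊆ Σ_{ψ(A)}`;
(3) if unconditional sums relative to `A` are unique whenever they exist, then
`Σ_A = Σ_{ψ(A)}` and `ψ` is monotone above `A`. -/
theorem stmt_14 {X : Type*} [AddCommGroup X] (A : Set (Set X)) :
    (A ⊆ psiColl A ∧ psiColl (psiColl A) = psiColl A) ∧
    (∀ (I : Type) (a : I → X) (x : X),
      UniqueUncond A a x → UniqueUncond (psiColl A) a x) ∧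
    ((∀ (I : Type) (a : I → X) (x y : X),
        UncondSum A a x → UncondSum A a y → x = y) →
      (∀ (I : Type) (a : I → X) (x : X),
        UniqueUncond A a x ↔ UniqueUncond (psiColl A) a x) ∧
      (∀ B : Set (Set X), A ⊆ B → psiColl A ⊆ psiColl B)) := by
  exact ⟨⟨subset_psiColl, psiColl_psiColl⟩, fun _ _ _ h => h.psiColl,
    fun huniq => ⟨fun I _ _ => uniqueUncond_iff_psiColl (huniq I _),
      fun _ => psiColl_mono_of_uniqueness huniq⟩⟩
end

section
/- Let (X, ·, 1) be a (multiplicative) monoid with a summation system Σ such that: (i) Σ satisfies left reorderability; (ii) Σ is surjective (every element of X is the sum of some summable family); (iii) every singleton family whose sole member is 1 is summable with sum 1; and (iv) the empty family is summable and there is an element m ∈ X such that the two-entry family (1, m) is summable with sum Σ(). Then the induced addition a ⊞ b := Σ(a, b) (the sum of the family with entries a and b on a fixed two-element index set) is defined for all a, b ∈ X, and X equipped with addition ⊞, additive identity Σ(), and the given multiplication is a ring: ⊞ is total, associative, and commutative, Σ() is a two-sided identity for ⊞, every element of X has an additive inverse with respect to ⊞, and the multiplication distributes over ⊞ on both sides.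 -/
/-!
Left reorderability with all weights equal to `1` says that a sum may be regrouped along any
partition of its index set; with arbitrary weights it refines a summable family into a finer
summable one. Together with surjectivity and the axiom on unit singletons this makes every
singleton family sum to its entry, so sums are invariant under reindexing and can be multiplied
by a constant on either side.

Write `0 = Σ()`. Multiplying `1 ⊞ m = 0` on the right by `m` gives `m ⊞ m² = 0`, and refining
`(1, m)` produces a summable table `[[1, m], [0, m²]]`. Summing it by rows gives `0 ⊞ m² = m²`,
by columns `1 ⊞ 0 = 1`, so `m² = 1`. Hence `(a, b) = (a · 1, (b m) · m)` is a refinement of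
`(1, m)`, so every pair is summable, and the same row/column argument on `[[a, b], [0, c]]`
gives associativity.
-/

/-- Left reorderability of a summation system `S` over a multiplicative structure `X`:
if `(a_i)_{i∈I}` is summable, `(r_k)_{k∈K}` is arbitrary, `ψ : K → 𝒫(I)`, and the
family `(r_k)_{k∈ψ'(i)}` is summable (with sum `t i`) for each `i`, then the family
`(t i * a i)_{i∈I}` is summable, each `(a_i)_{i∈ψ(k)}` is summable, and for any choice
`u` of those inner sums, `(r k * u k)_{k∈K}` is summable with the same sum as
`(t i * a i)_{i∈I}`. -/
def LeftReorderable {X : Type*} [Mul X]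
    (S : (I : Type) → (I → X) → X → Prop) : Prop :=
  ∀ (I K : Type) (a : I → X) (x : X) (r : K → X) (ψ : K → Set I) (t : I → X),
    S I a x →
    (∀ i : I, S {k : K // i ∈ ψ k} (fun k => r k.1) (t i)) →
    (∃ L, S I (fun i => t i * a i) L) ∧
    (∀ k : K, ∃ s, S {i : I // i ∈ ψ k} (fun i => a i.1) s) ∧
    (∀ u : K → X,
      (∀ k : K, S {i : I // i ∈ ψ k} (fun i => a i.1) (u k)) →
      ∃ R, S K (fun k => r k * u k) R ∧
        ∀ L, S I (fun i => t i * a i) L → L = R)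

section

variable {X : Type*}

def IsFunctionalSum (S : (I : Type) → (I → X) → X → Prop) : Prop :=
  ∀ (I : Type) (a : I → X) (x y : X), S I a x → S I a y → x = y

def IsSurjectiveSum (S : (I : Type) → (I → X) → X → Prop) : Prop :=
  ∀ x : X, ∃ (I : Type) (a : I → X), S I a x

def SumsOneOnSingletons [One X] (S : (I : Type) → (I → X) → X → Prop) : Prop :=
  ∀ (I : Type) (i₀ : I), (∀ i, i = i₀) → S I (fun _ => 1) 1

def boolPair (a b : X) : Bool → X := fun i => if i then b else a

-- The table `[[a, b], [c, d]]`, rows indexed by the first coordinate, `false` first.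
def boolTable (a b c d : X) : Bool × Bool → X :=
  fun k => boolPair (boolPair a b k.2) (boolPair c d k.2) k.1

theorem mul_boolPair [Mul X] (c a b : X) :
    (fun i => c * boolPair a b i) = boolPair (c * a) (c * b) := by
  funext i; cases i <;> rfl

theorem boolPair_mul [Mul X] (a b c : X) :
    (fun i => boolPair a b i * c) = boolPair (a * c) (b * c) := by
  funext i; cases i <;> rfl

namespace LeftReorderable

variable {S : (I : Type) → (I → X) → X → Prop}

section MulOneClass

variable [MulOneClass X]

section Families

variable {I J K : Type} {a : I → X} {x : X}

theorem sum_of_partition (hS : LeftReorderable S) (hone : SumsOneOnSingletons S)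
    (ha : S I a x) (ψ : K → Set I) (hψ : ∀ i, ∃! k, i ∈ ψ k) :
    (∀ k, ∃ s, S {i : I // i ∈ ψ k} (fun i => a i.1) s) ∧
      ∀ u : K → X, (∀ k, S {i : I // i ∈ ψ k} (fun i => a i.1) (u k)) → S K u x := by
  have hfiber : ∀ i, S {k : K // i ∈ ψ k} (fun _ => 1) 1 := fun i => by
    obtain ⟨k, hk, huniq⟩ := hψ i
    exact hone _ ⟨k, hk⟩ fun k' => Subtype.ext (huniq _ k'.2)
  obtain ⟨-, hparts, hregroup⟩ := hS I K a x (fun _ => 1) ψ (fun _ => 1) ha hfiber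
  refine ⟨hparts, fun u hu => ?_⟩
  obtain ⟨R, hR, hLR⟩ := hregroup u hu
  rw [hLR x (by simpa using ha)]
  simpa using hR

theorem sum_const_of_sum_univ (hS : LeftReorderable S) (hone : SumsOneOnSingletons S)
    (ha : S I a x) {s : X} (hs : S {i : I // i ∈ Set.univ} (fun i => a i.1) s)
    {T : Type} (t₀ : T) (hT : ∀ t, t = t₀) : S T (fun _ => s) x :=
  (hS.sum_of_partition hone ha (fun _ => Set.univ) fun _ => ⟨t₀, trivial, fun t _ => hT t⟩).2
    _ fun _ => hs

theorem sum_singleton (hS : LeftReorderable S) (hone : SumsOneOnSingletons S)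
    (hsurj : IsSurjectiveSum S) {T : Type} (t₀ : T) (hT : ∀ t, t = t₀) (f : T → X) :
    S T f (f t₀) := by
  obtain ⟨I, a, ha⟩ := hsurj (f t₀)
  obtain ⟨s, hs⟩ := (hS.sum_of_partition hone ha (fun _ : Unit => Set.univ) fun _ =>
    ⟨(), trivial, fun _ _ => rfl⟩).1 ()
  -- The singleton family `(s)` sums to `f t₀`, and so does its own `univ`-part; hence so does
  -- the singleton family `(f t₀)`.
  have hunit : S Unit (fun _ => s) (f t₀) := hS.sum_const_of_sum_univ hone ha hs () fun _ => rfl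
  have hlift : S {u : Unit // u ∈ Set.univ} (fun _ => s) (f t₀) :=
    hS.sum_const_of_sum_univ hone ha hs ⟨(), trivial⟩ fun _ => rfl
  convert hS.sum_const_of_sum_univ hone hunit hlift t₀ hT using 1
  funext t
  rw [hT t]

theorem sum_comp_equiv (hS : LeftReorderable S) (hone : SumsOneOnSingletons S)
    (hsurj : IsSurjectiveSum S) (ha : S I a x) (e : J ≃ I) : S J (a ∘ e) x :=
  (hS.sum_of_partition hone ha (fun j => {e j}) fun i =>
      ⟨e.symm i, by simp, fun j hj => by simp [show i = e j from hj]⟩).2 _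
    fun j => hS.sum_singleton hone hsurj (⟨e j, rfl⟩ : {i // i ∈ ({e j} : Set I)})
      (fun i => Subtype.ext i.2) _

theorem sum_of_isEmpty (hS : LeftReorderable S) (hone : SumsOneOnSingletons S)
    [IsEmpty I] [IsEmpty K] (ha : S I a x) (f : K → X) : S K f x :=
  (hS.sum_of_partition hone ha (fun _ => ∅) isEmptyElim).2 f isEmptyElim

theorem exists_sum_mul_comp (hS : LeftReorderable S) (hone : SumsOneOnSingletons S)
    (hsurj : IsSurjectiveSum S) (ha : S I a x) (e : K → I) (r : K → X)
    (hr : ∀ i, ∃ t, S {k : K // e k = i} (fun k => r k.1) t) :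
    ∃ R, S K (fun k => r k * a (e k)) R := by
  choose t ht using hr
  obtain ⟨-, -, hrefine⟩ := hS I K a x r (fun k => {i | e k = i}) t ha ht
  obtain ⟨R, hR, -⟩ := hrefine (fun k => a (e k)) fun k =>
    hS.sum_singleton hone hsurj (⟨e k, rfl⟩ : {i // i ∈ {i | e k = i}})
      (fun i => Subtype.ext i.2.symm) _
  exact ⟨R, hR⟩

theorem sum_mul_left (hfun : IsFunctionalSum S) (hS : LeftReorderable S)
    (hone : SumsOneOnSingletons S) (hsurj : IsSurjectiveSum S) (ha : S I a x) (c : X) :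
    S I (fun i => c * a i) (c * x) := by
  obtain ⟨⟨L, hL⟩, -, hreord⟩ := hS I Unit a x (fun _ => c) (fun _ => Set.univ) (fun _ => c) ha
    fun i => hS.sum_singleton hone hsurj (⟨(), trivial⟩ : {k : Unit // i ∈ Set.univ})
      (fun _ => rfl) _
  obtain ⟨R, hR, hLR⟩ := hreord (fun _ => x) fun _ =>
    hS.sum_comp_equiv hone hsurj ha (Equiv.subtypeUnivEquiv fun _ => trivial)
  rwa [hLR L hL, hfun _ _ _ _ hR (hS.sum_singleton hone hsurj () (fun _ => rfl) _)] at hL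

theorem sum_mul_right (hfun : IsFunctionalSum S) (hS : LeftReorderable S)
    (hone : SumsOneOnSingletons S) (hsurj : IsSurjectiveSum S) (ha : S I a x) (c : X) :
    S I (fun i => a i * c) (x * c) := by
  obtain ⟨⟨L, hL⟩, -, hreord⟩ := hS Unit I (fun _ => c) c a (fun _ => Set.univ) (fun _ => x)
    (hS.sum_singleton hone hsurj () (fun _ => rfl) _)
    fun _ => hS.sum_comp_equiv hone hsurj ha (Equiv.subtypeUnivEquiv fun _ => trivial)
  obtain ⟨R, hR, hLR⟩ := hreord (fun _ => c) fun _ =>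
    hS.sum_singleton hone hsurj (⟨(), trivial⟩ : {u : Unit // u ∈ Set.univ}) (fun _ => rfl) _
  rwa [← hLR L hL, hfun _ _ _ _ hL (hS.sum_singleton hone hsurj () (fun _ => rfl) _)] at hR

theorem sum_fst_fiber (hS : LeftReorderable S) (hone : SumsOneOnSingletons S)
    (hsurj : IsSurjectiveSum S) {F : I × J → X} {i : I} {s : X}
    (hrow : S J (fun j => F (i, j)) s) : S {k : I × J // k.1 = i} (fun k => F k.1) s := by
  let e : {k : I × J // k.1 = i} ≃ J :=
    ⟨fun k => k.1.2, fun j => ⟨(i, j), rfl⟩, fun ⟨_, hk⟩ => by subst hk; rfl, fun _ => rfl⟩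
  convert hS.sum_comp_equiv hone hsurj hrow e using 1
  funext ⟨k, hk⟩
  subst hk
  rfl

theorem sum_of_sum_rows (hS : LeftReorderable S) (hone : SumsOneOnSingletons S)
    (hsurj : IsSurjectiveSum S) {F : I × J → X} {w : X} (hF : S (I × J) F w) {u : I → X}
    (hu : ∀ i, S J (fun j => F (i, j)) (u i)) : S I u w :=
  (hS.sum_of_partition hone hF (fun i => {k | k.1 = i}) fun k =>
    ⟨k.1, rfl, fun _ h => h.symm⟩).2 u fun i => hS.sum_fst_fiber hone hsurj (hu i)

theorem sum_of_sum_cols (hS : LeftReorderable S) (hone : SumsOneOnSingletons S)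
    (hsurj : IsSurjectiveSum S) {F : I × J → X} {w : X} (hF : S (I × J) F w) {v : J → X}
    (hv : ∀ j, S I (fun i => F (i, j)) (v j)) : S J v w :=
  hS.sum_of_sum_rows hone hsurj (hS.sum_comp_equiv hone hsurj hF (Equiv.prodComm J I)) hv

theorem exists_sum_mul_fst (hS : LeftReorderable S) (hone : SumsOneOnSingletons S)
    (hsurj : IsSurjectiveSum S) (ha : S I a x) (r : I × J → X)
    (hr : ∀ i, ∃ t, S J (fun j => r (i, j)) t) : ∃ R, S (I × J) (fun k => r k * a k.1) R :=
  hS.exists_sum_mul_comp hone hsurj ha Prod.fst r fun i =>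
    (hr i).imp fun _ => hS.sum_fst_fiber hone hsurj

end Families

section Pairs

variable {E : Type} [IsEmpty E] {e : E → X} {z a b c d s t w x : X}

theorem mul_sum_of_isEmpty (hfun : IsFunctionalSum S) (hS : LeftReorderable S)
    (hone : SumsOneOnSingletons S) (hsurj : IsSurjectiveSum S) (hz : S E e z) (c : X) :
    c * z = z :=
  hfun _ _ _ _ (hS.sum_mul_left hfun hone hsurj hz c) (hS.sum_of_isEmpty hone hz _)

theorem sum_of_isEmpty_mul (hfun : IsFunctionalSum S) (hS : LeftReorderable S)
    (hone : SumsOneOnSingletons S) (hsurj : IsSurjectiveSum S) (hz : S E e z) (c : X) :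
    z * c = z :=
  hfun _ _ _ _ (hS.sum_mul_right hfun hone hsurj hz c) (hS.sum_of_isEmpty hone hz _)

theorem sum_boolPair_swap (hS : LeftReorderable S) (hone : SumsOneOnSingletons S)
    (hsurj : IsSurjectiveSum S) (h : S Bool (boolPair a b) s) : S Bool (boolPair b a) s := by
  convert hS.sum_comp_equiv hone hsurj h Equiv.boolNot using 1
  funext i; cases i <;> rfl

theorem sum_boolPair_of_isEmpty_right (hS : LeftReorderable S) (hone : SumsOneOnSingletons S)
    (hsurj : IsSurjectiveSum S) (hz : S E e z) (a : X) : S Bool (boolPair a z) a := by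
  have ha : S Unit (fun _ => a) a := hS.sum_singleton hone hsurj () (fun _ => rfl) _
  refine (hS.sum_of_partition hone ha (fun b => {_u | b = false}) fun _ =>
    ⟨false, rfl, fun _ h => h⟩).2 _ (Bool.forall_bool.2 ⟨?_, ?_⟩)
  · exact hS.sum_singleton hone hsurj (⟨(), rfl⟩ : {u : Unit // u ∈ {_u | false = false}})
      (fun _ => rfl) _
  · have : IsEmpty {u : Unit // u ∈ {_u | true = false}} := ⟨fun u => Bool.noConfusion u.2⟩
    exact hS.sum_of_isEmpty hone hz _

theorem sum_boolPair_of_isEmpty_left (hS : LeftReorderable S) (hone : SumsOneOnSingletons S)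
    (hsurj : IsSurjectiveSum S) (hz : S E e z) (a : X) : S Bool (boolPair z a) a :=
  hS.sum_boolPair_swap hone hsurj (hS.sum_boolPair_of_isEmpty_right hone hsurj hz a)

theorem sum_boolPair_of_rows (hS : LeftReorderable S) (hone : SumsOneOnSingletons S)
    (hsurj : IsSurjectiveSum S) (hF : S (Bool × Bool) (boolTable a b c d) w)
    (h₀ : S Bool (boolPair a b) s) (h₁ : S Bool (boolPair c d) t) : S Bool (boolPair s t) w :=
  hS.sum_of_sum_rows hone hsurj hF (Bool.forall_bool.2 ⟨h₀, h₁⟩)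

theorem sum_boolPair_of_cols (hS : LeftReorderable S) (hone : SumsOneOnSingletons S)
    (hsurj : IsSurjectiveSum S) (hF : S (Bool × Bool) (boolTable a b c d) w)
    (h₀ : S Bool (boolPair a c) s) (h₁ : S Bool (boolPair b d) t) : S Bool (boolPair s t) w :=
  hS.sum_of_sum_cols hone hsurj hF (Bool.forall_bool.2 ⟨h₀, h₁⟩)

theorem exists_sum_boolTable (hS : LeftReorderable S) (hone : SumsOneOnSingletons S)
    (hsurj : IsSurjectiveSum S) {p q : X} (hpq : S Bool (boolPair p q) x)
    (h₀ : ∃ s, S Bool (boolPair a b) s) (h₁ : ∃ t, S Bool (boolPair c d) t) :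
    ∃ w, S (Bool × Bool) (boolTable (a * p) (b * p) (c * q) (d * q)) w := by
  obtain ⟨w, hw⟩ :=
    hS.exists_sum_mul_fst hone hsurj hpq (boolTable a b c d) (Bool.forall_bool.2 ⟨h₀, h₁⟩)
  refine ⟨w, ?_⟩
  convert hw using 1
  funext ⟨i, j⟩; cases i <;> cases j <;> rfl

end Pairs

end MulOneClass

section Monoid

variable [Monoid X] {E : Type} [IsEmpty E] {e : E → X} {z m : X}

theorem mul_self_eq_one (hfun : IsFunctionalSum S) (hS : LeftReorderable S)
    (hone : SumsOneOnSingletons S) (hsurj : IsSurjectiveSum S) (hz : S E e z)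
    (hm : S Bool (boolPair 1 m) z) : m * m = 1 := by
  have hzm : z * m = z := hS.sum_of_isEmpty_mul hfun hone hsurj hz m
  have hmm : S Bool (boolPair m (m * m)) z := by
    simpa only [boolPair_mul, one_mul, hzm] using hS.sum_mul_right hfun hone hsurj hm m
  obtain ⟨w, hw⟩ := hS.exists_sum_boolTable hone hsurj hm ⟨z, hm⟩
    ⟨m, hS.sum_boolPair_of_isEmpty_left hone hsurj hz m⟩
  rw [mul_one, mul_one, hzm] at hw
  have hrows := hS.sum_boolPair_of_rows hone hsurj hw hm
    (hS.sum_boolPair_of_isEmpty_left hone hsurj hz (m * m))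
  have hcols := hS.sum_boolPair_of_cols hone hsurj hw
    (hS.sum_boolPair_of_isEmpty_right hone hsurj hz 1) hmm
  calc m * m = w := hfun _ _ _ _ (hS.sum_boolPair_of_isEmpty_left hone hsurj hz _) hrows
    _ = 1 := hfun _ _ _ _ hcols (hS.sum_boolPair_of_isEmpty_right hone hsurj hz 1)

theorem exists_sum_boolPair (hfun : IsFunctionalSum S) (hS : LeftReorderable S)
    (hone : SumsOneOnSingletons S) (hsurj : IsSurjectiveSum S) (hz : S E e z)
    (hm : S Bool (boolPair 1 m) z) (a b : X) : ∃ s, S Bool (boolPair a b) s := by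
  obtain ⟨s, hs⟩ := hS.exists_sum_mul_comp hone hsurj hm id (boolPair a (b * m)) fun i =>
    ⟨boolPair a (b * m) i, hS.sum_singleton hone hsurj (⟨i, rfl⟩ : {k : Bool // k = i})
      (fun k => Subtype.ext k.2) _⟩
  refine ⟨s, ?_⟩
  convert hs using 1
  funext i
  cases i
  · exact (mul_one a).symm
  · exact (by rw [mul_assoc, hS.mul_self_eq_one hfun hone hsurj hz hm, mul_one] : b = b * m * m)

theorem sum_boolPair_assoc (hfun : IsFunctionalSum S) (hS : LeftReorderable S)
    (hone : SumsOneOnSingletons S) (hsurj : IsSurjectiveSum S) (hz : S E e z)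
    (hm : S Bool (boolPair 1 m) z) {a b c s t w : X} (hab : S Bool (boolPair a b) s)
    (hbc : S Bool (boolPair b c) t) (h : S Bool (boolPair a t) w) : S Bool (boolPair s c) w := by
  obtain ⟨u, hu⟩ := hS.exists_sum_boolPair hfun hone hsurj hz hm 1 1
  obtain ⟨W, hW⟩ := hS.exists_sum_boolTable hone hsurj hu ⟨s, hab⟩
    ⟨c, hS.sum_boolPair_of_isEmpty_left hone hsurj hz c⟩
  simp only [mul_one] at hW
  have hcols := hS.sum_boolPair_of_cols hone hsurj hW
    (hS.sum_boolPair_of_isEmpty_right hone hsurj hz a) hbc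
  rw [hfun _ _ _ _ h hcols]
  exact hS.sum_boolPair_of_rows hone hsurj hW hab (hS.sum_boolPair_of_isEmpty_left hone hsurj hz c)

end Monoid

end LeftReorderable

end

/-- Let `(X,·,1)` be a monoid with a summation system `S` that is
left reorderable and surjective, in which singleton families with sole member `1` sum
to `1`, the empty family is summable with sum `z = Σ()`, and some two-entry family
`(1, m)` sums to `z`.  Then the induced addition `a ⊞ b := Σ(a, b)` is total, and `X`
with `⊞`, additive identity `z`, and the given multiplication is a ring. -/
theorem stmt_16 {X : Type*} [Monoid X]
    (S : (I : Type) → (I → X) → X → Prop)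
    (hfun : ∀ (I : Type) (a : I → X) (x y : X), S I a x → S I a y → x = y)
    (hreord : LeftReorderable S)
    (hsurj : ∀ x : X, ∃ (I : Type) (a : I → X), S I a x)
    (hone : ∀ (I : Type) (i₀ : I), (∀ i, i = i₀) → S I (fun _ => (1 : X)) 1)
    (z : X) (hz : S PEmpty (fun i => i.elim) z)
    (hm : ∃ m : X, S Bool (fun b => if b then m else (1 : X)) z) :
    ∃ add : X → X → X,
      (∀ a b : X, S Bool (fun i => if i then b else a) (add a b)) ∧
      (∀ a b c : X, add (add a b) c = add a (add b c)) ∧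
      (∀ a b : X, add a b = add b a) ∧
      (∀ a : X, add z a = a) ∧ (∀ a : X, add a z = a) ∧
      (∀ a : X, ∃ b : X, add a b = z ∧ add b a = z) ∧
      (∀ a b c : X, a * add b c = add (a * b) (a * c)) ∧
      (∀ a b c : X, add a b * c = add (a * c) (b * c)) := by
  obtain ⟨m, hm⟩ := hm
  change S Bool (boolPair 1 m) z at hm
  choose add hadd using hreord.exists_sum_boolPair hfun hone hsurj hz hm
  have add_eq {a b s : X} (h : S Bool (boolPair a b) s) : add a b = s := hfun _ _ _ _ (hadd a b) h
  have hneg (a : X) : S Bool (boolPair a (a * m)) z := by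
    simpa only [mul_boolPair, mul_one, hreord.mul_sum_of_isEmpty hfun hone hsurj hz a]
      using hreord.sum_mul_left hfun hone hsurj hm a
  refine ⟨add, hadd, fun a b c => ?_, fun a b => ?_, fun a => ?_, fun a => ?_, fun a => ?_,
    fun a b c => ?_, fun a b c => ?_⟩
  · exact add_eq (hreord.sum_boolPair_assoc hfun hone hsurj hz hm (hadd a b) (hadd b c) (hadd a _))
  · exact add_eq (hreord.sum_boolPair_swap hone hsurj (hadd b a))
  · exact add_eq (hreord.sum_boolPair_of_isEmpty_left hone hsurj hz a)
  · exact add_eq (hreord.sum_boolPair_of_isEmpty_right hone hsurj hz a)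
  · exact ⟨a * m, add_eq (hneg a), add_eq (hreord.sum_boolPair_swap hone hsurj (hneg a))⟩
  · exact (add_eq (by simpa only [mul_boolPair] using
      hreord.sum_mul_left hfun hone hsurj (hadd b c) a)).symm
  · exact (add_eq (by simpa only [boolPair_mul] using
      hreord.sum_mul_right hfun hone hsurj (hadd a b) c)).symm
end

section
/- Let X be a ring (with identity 1) and let Σ be a summation system on X satisfying: left reorderability; surjectivity; the empty family is summable with Σ() = 0; every singleton family sums to its sole member; and every two-entry family (a, b) is summable with Σ(a, b) = a + b, where + is the ring addition (so X with Σ is a reorderable ring whose induced addition and zero agree with the ring structure). Then for every t ∈ X, a family a : ℕ → X is summable with Σa = t if and only if the family k ↦ t − (a 0 + a 1 + ⋯ + a (k−1)) (k ∈ ℕ) is summable. -/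
section SummationAxioms

variable {X : Type*} (S : (I : Type) → (I → X) → X → Prop)

def SumUnique : Prop :=
  ∀ (I : Type) (a : I → X) (x y : X), S I a x → S I a y → x = y

def SumSingleton : Prop :=
  ∀ (I : Type) (i₀ : I), (∀ i, i = i₀) → ∀ a : I → X, S I a (a i₀)

def SumPair [Add X] : Prop :=
  ∀ (I : Type) (i₀ i₁ : I), i₀ ≠ i₁ → (∀ i, i = i₀ ∨ i = i₁) →
    ∀ a : I → X, S I a (a i₀ + a i₁)

end SummationAxioms

namespace LeftReorderable

variable {X : Type*} {S : (I : Type) → (I → X) → X → Prop} {I K : Type}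

theorem sum_comp_mul [Mul X] (hreord : LeftReorderable S) (hsingle : SumSingleton S)
    {a : I → X} {x : X} (ha : S I a x) (φ : K → I) {r : K → X} {τ : I → X}
    (hr : ∀ i, S {k // φ k = i} (fun k => r k) (τ i)) :
    ∃ R, S K (fun k => r k * a (φ k)) R ∧ ∀ L, S I (fun i => τ i * a i) L → L = R :=
  (hreord I K a x r (fun k => {i | φ k = i}) τ ha hr).2.2 (fun k => a (φ k)) fun k =>
    hsingle _ ⟨φ k, rfl⟩ (fun i => Subtype.ext i.2.symm) _

theorem sum_comp_equiv_s18 [MulOneClass X] (hreord : LeftReorderable S) (hsingle : SumSingleton S)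
    {a : I → X} {x : X} (e : K ≃ I) (ha : S I a x) : S K (fun k => a (e k)) x := by
  have hfibre (i : I) : S {k // e k = i} (fun _ => 1) 1 :=
    hsingle {k // e k = i} ⟨e.symm i, e.apply_symm_apply i⟩
      (fun k => Subtype.ext (e.eq_symm_apply.mpr k.2)) _
  obtain ⟨R, hR, hL⟩ :=
    hreord.sum_comp_mul hsingle ha e (r := fun _ => 1) (τ := fun _ => 1) hfibre
  simp only [one_mul] at hR hL
  rwa [hL x ha]

theorem sum_fiberwise [MulOneClass X] (hreord : LeftReorderable S) (hsingle : SumSingleton S)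
    {a : I → X} {x : X} (ha : S I a x) (φ : I → K) {u : K → X}
    (hu : ∀ k, S {i // φ i = k} (fun i => a i) (u k)) : S K u x := by
  have hfibre (i : I) : S {k // φ i = k} (fun _ => 1) 1 :=
    hsingle _ ⟨φ i, rfl⟩ (fun k => Subtype.ext k.2.symm) _
  obtain ⟨R, hR, hL⟩ :=
    (hreord I K a x (fun _ => 1) (fun k => {i | φ i = k}) _ ha hfibre).2.2 u hu
  simp only [one_mul] at hR hL
  rwa [hL x ha]

theorem sum_fintype [NonAssocSemiring X] (hreord : LeftReorderable S) (hsingle : SumSingleton S)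
    (hpair : SumPair S) (hempty : S PEmpty (fun i => i.elim) 0) (K : Type) [Fintype K]
    (f : K → X) : S K f (∑ k, f k) := by
  refine Fintype.induction_empty_option (P := fun K _ => ∀ f : K → X, S K f (∑ k, f k))
    ?_ ?_ ?_ K f
  · intro K₀ K _ e ih f
    let _ : Fintype K₀ := Fintype.ofEquiv K e.symm
    rw [← e.sum_comp]
    simpa using hreord.sum_comp_equiv_s18 hsingle e.symm (ih fun k => f (e k))
  · intro f
    simpa [Subsingleton.elim f fun i => i.elim] using hempty
  · intro K _ ih f
    have hfibre : ∀ b, S {o : Option K // o.isSome = b} (fun o => f o)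
        (cond b (∑ k, f (some k)) (f none)) := by
      rintro (_ | _)
      · exact hsingle {o : Option K // o.isSome = false} ⟨none, rfl⟩
          (fun ⟨o, ho⟩ => by cases o <;> simp at ho ⊢) _
      · simpa using hreord.sum_comp_equiv_s18 hsingle (Equiv.optionIsSomeEquiv K)
          (ih fun k => f (some k))
    obtain ⟨R, hR, hL⟩ := hreord.sum_comp_mul hsingle (hpair Bool true false (by simp)
      (by simp) fun _ => 1) Option.isSome hfibre
    simp only [mul_one] at hR hL
    obtain rfl : ∑ k, f (some k) + f none = R :=
      hL _ (hpair Bool true false (by simp) (by simp) _)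
    rwa [Fintype.sum_option, add_comm]

theorem sum_finset [NonAssocSemiring X] (hreord : LeftReorderable S) (hsingle : SumSingleton S)
    (hpair : SumPair S) (hempty : S PEmpty (fun i => i.elim) 0) (s : Finset I) (f : I → X) :
    S {i // i ∈ s} (fun i => f i) (∑ i ∈ s, f i) := by
  rw [← Finset.sum_coe_sort]
  exact hreord.sum_fintype hsingle hpair hempty s fun i => f i

theorem exists_sum_subtype [NonAssocSemiring X] (hreord : LeftReorderable S)
    (hsingle : SumSingleton S) (hpair : SumPair S) (hempty : S PEmpty (fun i => i.elim) 0)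
    {a : I → X} {x : X} (ha : S I a x) (p : I → Prop) :
    ∃ s, S {i // p i} (fun i => a i) s := by
  classical
  exact (hreord I PUnit a x (fun _ => 1) (fun _ => {i | p i}) _ ha
    fun i => hreord.sum_fintype hsingle hpair hempty _ _).2.1 .unit

theorem sum_of_eq_zero_of_ne [NonAssocSemiring X] (hreord : LeftReorderable S)
    (hsingle : SumSingleton S) (hpair : SumPair S) (hempty : S PEmpty (fun i => i.elim) 0)
    {f : I → X} (i₀ : I) (hf : ∀ i ≠ i₀, f i = 0) : S I f (f i₀) := by
  classical
  refine hreord.sum_fiberwise hsingle (hsingle PUnit .unit (fun _ => rfl) fun _ => f i₀)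
    (fun _ => i₀) fun i => ?_
  by_cases hi : i₀ = i
  · subst hi
    exact hsingle {u : PUnit // i₀ = i₀} ⟨.unit, rfl⟩ (fun _ => rfl) _
  · have : IsEmpty {u : PUnit // i₀ = i} := ⟨fun u => hi u.2⟩
    have := hreord.sum_fintype hsingle hpair hempty {u : PUnit // i₀ = i} fun _ => f i₀
    rwa [Finset.univ_eq_empty, Finset.sum_empty, ← hf i (Ne.symm hi)] at this

theorem eq_add_of_sum_subtype_of_sum_subtype_not [NonAssocSemiring X]
    (hreord : LeftReorderable S) (hfun : SumUnique S) (hsingle : SumSingleton S)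
    (hpair : SumPair S) {a : I → X} {x s₁ s₂ : X} (ha : S I a x) {p : I → Prop}
    (h₁ : S {i // p i} (fun i => a i) s₁) (h₂ : S {i // ¬p i} (fun i => a i) s₂) :
    x = s₁ + s₂ := by
  classical
  have hblock : ∀ b, S {i // decide (p i) = b} (fun i => a i) (cond b s₁ s₂) := by
    rintro (_ | _)
    · simpa using hreord.sum_comp_equiv_s18 hsingle (Equiv.subtypeEquivRight fun i => by simp) h₂
    · simpa using hreord.sum_comp_equiv_s18 hsingle (Equiv.subtypeEquivRight fun i => by simp) h₁
  exact hfun _ _ _ _ (hreord.sum_fiberwise hsingle ha (fun i => decide (p i)) hblock)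
    (hpair Bool true false (by simp) (by simp) _)

theorem sum_subtype_not_mem_finset [Ring X] (hreord : LeftReorderable S) (hfun : SumUnique S)
    (hsingle : SumSingleton S) (hpair : SumPair S) (hempty : S PEmpty (fun i => i.elim) 0)
    {a : I → X} {x : X} (ha : S I a x) (s : Finset I) :
    S {i // i ∉ s} (fun i => a i) (x - ∑ i ∈ s, a i) := by
  obtain ⟨y, hy⟩ := hreord.exists_sum_subtype hsingle hpair hempty ha (· ∉ s)
  have hx := hreord.eq_add_of_sum_subtype_of_sum_subtype_not hfun hsingle hpair ha
    (hreord.sum_finset hsingle hpair hempty s a) hy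
  rwa [hx, add_sub_cancel_left]

theorem exists_sum_sub_sum_range [Ring X] (hreord : LeftReorderable S) (hfun : SumUnique S)
    (hsingle : SumSingleton S) (hpair : SumPair S) (hempty : S PEmpty (fun i => i.elim) 0)
    {a : ℕ → X} {t : X} (ha : S ℕ a t) :
    ∃ y, S ℕ (fun k => t - ∑ i ∈ Finset.range k, a i) y := by
  have _ (i : ℕ) : Fintype {k : ℕ // i ∈ {j | j ∉ Finset.range k}} :=
    Fintype.subtype (Finset.range (i + 1)) (by simp)
  obtain ⟨R, hR, -⟩ := (hreord ℕ ℕ a t (fun _ => 1) (fun k => {j | j ∉ Finset.range k}) _ ha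
    fun i => hreord.sum_fintype hsingle hpair hempty _ _).2.2 _
    fun k => hreord.sum_subtype_not_mem_finset hfun hsingle hpair hempty ha (Finset.range k)
  exact ⟨R, by simpa using hR⟩

theorem sum_add_of_sum_elim [MulOneClass X] [Add X] (hreord : LeftReorderable S)
    (hsingle : SumSingleton S) (hpair : SumPair S) {f g : K → X} {x : X}
    (h : S (K ⊕ K) (Sum.elim f g) x) : S K (fun k => f k + g k) x :=
  hreord.sum_fiberwise hsingle h (Sum.elim id id) fun k =>
    hpair {j : K ⊕ K // Sum.elim id id j = k} ⟨.inl k, rfl⟩ ⟨.inr k, rfl⟩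
      (by simp [Subtype.ext_iff]) (by rintro ⟨_ | _, rfl⟩ <;> simp [Subtype.ext_iff]) _

theorem sum_elim_neg_shift [Ring X] (hreord : LeftReorderable S) (hsingle : SumSingleton S)
    (hpair : SumPair S) (hempty : S PEmpty (fun i => i.elim) 0) {b : ℕ → X} {y : X}
    (hb : S ℕ b y) : S (ℕ ⊕ ℕ) (Sum.elim b fun k => -b (k + 1)) (b 0) := by
  let sign : ℕ ⊕ ℕ → X := Sum.elim (fun _ => 1) fun _ => -1
  -- the signs over the preimage of `i` cancel unless `i = 0`
  have hfibre : ∀ i, S {k : ℕ ⊕ ℕ // Sum.elim (fun k => k) (· + 1) k = i} (fun k => sign k)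
      (if i = 0 then 1 else 0) := by
    rintro (_ | i)
    · exact hsingle {k : ℕ ⊕ ℕ // Sum.elim (fun k => k) (· + 1) k = 0} ⟨.inl 0, rfl⟩
        (by rintro ⟨_ | _, hk⟩ <;> simp at hk; subst hk; rfl) _
    · simpa [sign] using hpair {k : ℕ ⊕ ℕ // Sum.elim (fun k => k) (· + 1) k = i + 1}
        ⟨.inl (i + 1), rfl⟩ ⟨.inr i, rfl⟩ (by simp [Subtype.ext_iff])
        (by rintro ⟨_ | _, hk⟩ <;> simp at hk <;> subst hk <;> simp) fun k => sign k
  obtain ⟨R, hR, hL⟩ := hreord.sum_comp_mul hsingle hb (Sum.elim (fun k => k) (· + 1)) hfibre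
  have hb₀ : S ℕ (fun i => (if i = 0 then 1 else 0) * b i) (b 0) := by
    simpa using hreord.sum_of_eq_zero_of_ne hsingle hpair hempty
      (f := fun i => (if i = 0 then 1 else 0) * b i) 0 (by simp_all)
  convert hR using 2 with k
  · rcases k with k | k <;> simp [sign]
  · exact hL _ hb₀

theorem sum_sub_succ [Ring X] (hreord : LeftReorderable S) (hsingle : SumSingleton S)
    (hpair : SumPair S) (hempty : S PEmpty (fun i => i.elim) 0) {b : ℕ → X} {y : X}
    (hb : S ℕ b y) : S ℕ (fun k => b k - b (k + 1)) (b 0) := by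
  simpa [← sub_eq_add_neg] using
    hreord.sum_add_of_sum_elim hsingle hpair (hreord.sum_elim_neg_shift hsingle hpair hempty hb)

end LeftReorderable

theorem stmt_18_general {X : Type*} [Ring X]
    (S : (I : Type) → (I → X) → X → Prop)
    (hfun : ∀ (I : Type) (a : I → X) (x y : X), S I a x → S I a y → x = y)
    (hreord : LeftReorderable S)
    (hempty : S PEmpty (fun i => i.elim) 0)
    (hsingle : ∀ (I : Type) (i₀ : I), (∀ i, i = i₀) → ∀ a : I → X, S I a (a i₀))
    (hpair : ∀ (I : Type) (i₀ i₁ : I), i₀ ≠ i₁ → (∀ i, i = i₀ ∨ i = i₁) →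
      ∀ a : I → X, S I a (a i₀ + a i₁)) :
    ∀ (a : ℕ → X) (t : X),
      S ℕ a t ↔ ∃ y, S ℕ (fun k => t - ∑ i ∈ Finset.range k, a i) y := by
  refine fun a t => ⟨hreord.exists_sum_sub_sum_range hfun hsingle hpair hempty, ?_⟩
  rintro ⟨y, hy⟩
  simpa [Finset.sum_range_succ, ← sub_sub] using hreord.sum_sub_succ hsingle hpair hempty hy

/-- Let `X` be a ring with a summation system `S` making it a
reorderable ring whose induced addition and zero agree with the ring structure (left
reorderability, surjectivity, `Σ() = 0`, singletons sum simply, and two-entry families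
sum by ring addition).  Then for `t ∈ X`, a family `a : ℕ → X` is summable with sum
`t` iff the family `k ↦ t - (a 0 + ⋯ + a (k-1))` is summable. -/
theorem stmt_18 {X : Type*} [Ring X]
    (S : (I : Type) → (I → X) → X → Prop)
    (hfun : ∀ (I : Type) (a : I → X) (x y : X), S I a x → S I a y → x = y)
    (hreord : LeftReorderable S)
    (hsurj : ∀ x : X, ∃ (I : Type) (a : I → X), S I a x)
    (hempty : S PEmpty (fun i => i.elim) 0)
    (hsingle : ∀ (I : Type) (i₀ : I), (∀ i, i = i₀) → ∀ a : I → X, S I a (a i₀))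
    (hpair : ∀ (I : Type) (i₀ i₁ : I), i₀ ≠ i₁ → (∀ i, i = i₀ ∨ i = i₁) →
      ∀ a : I → X, S I a (a i₀ + a i₁)) :
    ∀ (a : ℕ → X) (t : X),
      S ℕ a t ↔ ∃ y, S ℕ (fun k => t - ∑ i ∈ Finset.range k, a i) y :=
  stmt_18_general S hfun hreord hempty hsingle hpair
end

section
/- Let X be a ring (with identity 1) and let Σ be a summation system on X satisfying: left reorderability; surjectivity; the empty family is summable with Σ() = 0; every singleton family sums to its sole member; and every two-entry family (a, b) is summable with Σ(a, b) = a + b, where + is the ring addition (so X with Σ is a reorderable ring whose induced addition and zero agree with the ring structure). Assume X is an I₀-ring: every left ideal of X containing no nonzero idempotent is contained in the Jacobson radical J of X. Then J is closed under countable Σ-sums: for every summable family a : ℕ → X with a i ∈ J for all i ∈ ℕ, the sum Σa lies in J. -/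
def prodFstFiberEquiv {I J : Type} (i : I) : {p : I × J // p.1 = i} ≃ J where
  toFun p := p.1.2
  invFun j := ⟨(i, j), rfl⟩
  left_inv := by rintro ⟨⟨_, _⟩, rfl⟩; rfl
  right_inv _ := rfl

def prodSndFiberEquiv {I J : Type} (j : J) : {p : I × J // p.2 = j} ≃ I where
  toFun p := p.1.1
  invFun i := ⟨(i, j), rfl⟩
  left_inv := by rintro ⟨⟨_, _⟩, rfl⟩; rfl
  right_inv _ := rfl

theorem Ideal.exists_mul_one_sub_eq_one_of_mem_jacobson_bot {R : Type*} [Ring R] {z : R}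
    (hz : z ∈ (⊥ : Ideal R).jacobson) : ∃ u, u * (1 - z) = 1 := by
  obtain ⟨u, hu⟩ := Ideal.mem_jacobson_iff.mp hz (-1)
  rw [Ideal.mem_bot, sub_eq_zero] at hu
  exact ⟨u, by rw [mul_sub, mul_one, ← hu]; noncomm_ring⟩

section Predicates

variable {X : Type*} (S : (I : Type) → (I → X) → X → Prop)

def SumIsFunctional : Prop :=
  ∀ (I : Type) (a : I → X) (x y : X), S I a x → S I a y → x = y

def SumsSingletons : Prop :=
  ∀ (I : Type) (i₀ : I), (∀ i, i = i₀) → ∀ a : I → X, S I a (a i₀)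

def SumsPairs [Add X] : Prop :=
  ∀ (I : Type) (i₀ i₁ : I), i₀ ≠ i₁ → (∀ i, i = i₀ ∨ i = i₁) →
    ∀ a : I → X, S I a (a i₀ + a i₁)

end Predicates

theorem SumsPairs.hasSum_bool {X : Type*} [Add X] {S : (I : Type) → (I → X) → X → Prop}
    (hpair : SumsPairs S) (f : Bool → X) : S Bool f (f true + f false) :=
  hpair Bool true false (by decide) (fun β => by cases β <;> simp) f

theorem SumsSingletons.hasSum_const {X : Type*} {S : (I : Type) → (I → X) → X → Prop}
    (hone : SumsSingletons S) {K : Type} {p : K → Prop} (hp : ∃! k, p k) (c : X) :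
    S {k // p k} (fun _ => c) c :=
  let ⟨k₀, hk₀, huniq⟩ := hp
  hone _ ⟨k₀, hk₀⟩ (fun k => Subtype.ext (huniq k.1 k.2)) _

theorem existsUnique_mem_cond {K : Type} (p : K → Prop) (k : K) :
    ∃! β : Bool, k ∈ cond β {k | p k} {k | ¬ p k} := by
  by_cases hk : p k
  · exact ⟨true, hk, fun β hβ => by cases β; exacts [absurd hk hβ, rfl]⟩
  · exact ⟨false, hk, fun β hβ => by cases β; exacts [rfl, absurd hβ hk]⟩

namespace LeftReorderable

variable {X : Type*} [Ring X] {S : (I : Type) → (I → X) → X → Prop} {I J K : Type}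
  {a : I → X} {x : X}

theorem exists_hasSum_part (hre : LeftReorderable S) (hone : SumsSingletons S) {ψ : K → Set I}
    (hψ : ∀ i, ∃! k, i ∈ ψ k) (hx : S I a x) (k : K) :
    ∃ s, S {i // i ∈ ψ k} (fun i => a i.1) s :=
  (hre I K a x (fun _ => 1) ψ (fun _ => 1) hx fun i => hone.hasSum_const (hψ i) 1).2.1 k

theorem hasSum_of_parts (hre : LeftReorderable S) (hone : SumsSingletons S) {ψ : K → Set I}
    (hψ : ∀ i, ∃! k, i ∈ ψ k) (hx : S I a x) {u : K → X}
    (hu : ∀ k, S {i // i ∈ ψ k} (fun i => a i.1) (u k)) : S K u x := by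
  obtain ⟨-, -, hR⟩ := hre I K a x (fun _ => 1) ψ (fun _ => 1) hx fun i =>
    hone.hasSum_const (hψ i) 1
  obtain ⟨R, hRu, hLR⟩ := hR u hu
  obtain rfl : x = R := hLR x (by simpa using hx)
  simpa using hRu

theorem hasSum_comp_equiv (hre : LeftReorderable S) (hone : SumsSingletons S) (hx : S I a x)
    {I' : Type} (E : I' ≃ I) : S I' (fun i => a (E i)) x :=
  hre.hasSum_of_parts hone (ψ := fun k => {E k})
    (fun i => ⟨E.symm i, by simp, fun k hk => by simp [Set.mem_singleton_iff.mp hk]⟩) hx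
    fun k => hone {i // i ∈ ({E k} : Set I)} ⟨E k, rfl⟩ (fun i => Subtype.ext i.2) _

theorem hasSum_of_isEmpty (hre : LeftReorderable S) (hone : SumsSingletons S)
    (hempty : S PEmpty (fun i => i.elim) 0) {T : Type} [IsEmpty T] (f : T → X) : S T f 0 := by
  convert hre.hasSum_comp_equiv hone hempty (Equiv.equivPEmpty T)

theorem hasSum_of_compl (hre : LeftReorderable S) (hone : SumsSingletons S)
    (hpair : SumsPairs S) (hfun : SumIsFunctional S) (p : K → Prop) {r : K → X} {y y' : X}
    (hy : S {k // p k} (fun k => r k.1) y) (hy' : S {k // ¬ p k} (fun k => r k.1) y') :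
    S K r (y + y') := by
  obtain ⟨⟨L, hL⟩, -, hR⟩ := hre Bool K (fun _ => 1) (1 + 1) r
    (fun k => {β | k ∈ cond β {k | p k} {k | ¬ p k}}) (fun β => cond β y y')
    (hpair.hasSum_bool _) (by rintro (_ | _); exacts [hy', hy])
  obtain ⟨R, hRr, hLR⟩ := hR (fun _ => 1) fun k =>
    hone.hasSum_const (existsUnique_mem_cond p k) 1
  have hL' : L = y + y' :=
    hfun _ _ _ _ (by simpa using hL) (hpair.hasSum_bool fun β => cond β y y')
  simpa [← hLR L hL, hL'] using hRr

theorem hasSum_finset (hre : LeftReorderable S) (hone : SumsSingletons S)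
    (hpair : SumsPairs S) (hfun : SumIsFunctional S) (hempty : S PEmpty (fun i => i.elim) 0)
    {ι : Type} (s : Finset ι) (f : ι → X) : S {i // i ∈ s} (fun i => f i.1) (∑ i ∈ s, f i) := by
  classical
  induction s using Finset.induction_on with
  | empty => simpa using hre.hasSum_of_isEmpty hone hempty _
  | insert i₀ s hi₀ ih =>
    rw [Finset.sum_insert hi₀]
    let E : {i : {i // i ∈ insert i₀ s} // ¬ i.1 = i₀} ≃ {i // i ∈ s} :=
      { toFun := fun i => ⟨i.1.1, (Finset.mem_insert.mp i.1.2).resolve_left i.2⟩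
        invFun := fun i => ⟨⟨i.1, Finset.mem_insert_of_mem i.2⟩, fun h => hi₀ (h ▸ i.2)⟩
        left_inv := fun _ => rfl
        right_inv := fun _ => rfl }
    refine hre.hasSum_of_compl hone hpair hfun (fun i => i.1 = i₀) ?_
      (hre.hasSum_comp_equiv hone ih E)
    exact hone {i : {i // i ∈ insert i₀ s} // i.1 = i₀}
      ⟨⟨i₀, Finset.mem_insert_self i₀ s⟩, rfl⟩ (fun i => Subtype.ext (Subtype.ext i.2)) _

theorem hasSum_mul_left (hre : LeftReorderable S) (hone : SumsSingletons S)
    (hfun : SumIsFunctional S) (hx : S I a x) (c : X) : S I (fun i => c * a i) (c * x) := by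
  obtain ⟨⟨L, hL⟩, -, hR⟩ := hre I PUnit a x (fun _ => c) (fun _ => Set.univ) (fun _ => c) hx
    fun _ => hone _ ⟨⟨⟩, trivial⟩ (fun _ => rfl) _
  obtain ⟨R, hRu, hLR⟩ := hR (fun _ => x) fun _ =>
    hre.hasSum_comp_equiv hone hx (Equiv.Set.univ I)
  rwa [hLR L hL, hfun _ _ _ _ hRu (hone PUnit ⟨⟩ (fun _ => rfl) _)] at hL

theorem hasSum_prodFstFiber (hre : LeftReorderable S) (hone : SumsSingletons S)
    {f : I → J → X} {i : I} {y : X} (hy : S J (f i) y) :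
    S {p : I × J // p.1 = i} (fun p => f p.1.1 p.1.2) y := by
  convert hre.hasSum_comp_equiv hone hy (prodFstFiberEquiv i) using 1
  funext ⟨⟨_, _⟩, rfl⟩
  rfl

theorem hasSum_mul_right (hre : LeftReorderable S) (hone : SumsSingletons S)
    (hfun : SumIsFunctional S) (hx : S I a x) {b : J → X} {y : X} (hy : S J b y) :
    S I (fun i => a i * y) (x * y) := by
  -- `Σⱼ x bⱼ` and `Σᵢ aᵢ y` are both regroupings of `Σ_{(i, j)} aᵢ bⱼ`.
  obtain ⟨⟨L, hL⟩, -, hR⟩ := hre J (I × J) b y (fun p => a p.1) (fun p => {j | p.2 = j})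
    (fun _ => x) hy fun j => hre.hasSum_comp_equiv hone hx (prodSndFiberEquiv j)
  obtain ⟨R, hRu, hLR⟩ := hR (fun p => b p.2) fun p =>
    hone {j // j ∈ {j | p.2 = j}} ⟨p.2, rfl⟩ (fun j => Subtype.ext j.2.symm) _
  obtain rfl : x * y = R :=
    (hfun _ _ _ _ hL (hre.hasSum_mul_left hone hfun hy x)).symm.trans (hLR L hL)
  exact hre.hasSum_of_parts hone (ψ := fun i => {p : I × J | p.1 = i})
    (fun p => ⟨p.1, rfl, fun _ h => h.symm⟩) hRu fun i =>
      hre.hasSum_prodFstFiber hone (f := fun i j => a i * b j)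
        (hre.hasSum_mul_left hone hfun hy (a i))

theorem hasSum_add (hre : LeftReorderable S) (hone : SumsSingletons S)
    (hpair : SumsPairs S) (hfun : SumIsFunctional S) (hx : S I a x) {b : I → X} {y : X}
    (hy : S I b y) : S I (fun i => a i + b i) (x + y) := by
  let c : Bool → I → X := fun β i => cond β (a i) (b i)
  have hc : S (Bool × I) (fun p => c p.1 p.2) (x + y) :=
    hre.hasSum_of_compl hone hpair hfun (fun p => p.1 = true)
      (hre.hasSum_prodFstFiber hone (f := c) (i := true) hx)
      (hre.hasSum_comp_equiv hone (hre.hasSum_prodFstFiber hone (f := c) (i := false) hy)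
        (Equiv.subtypeEquivRight fun p => by simp))
  refine hre.hasSum_of_parts hone (ψ := fun i => {p : Bool × I | p.2 = i})
    (fun p => ⟨p.2, rfl, fun _ h => h.symm⟩) hc fun i => ?_
  refine hpair {p : Bool × I // p ∈ {p : Bool × I | p.2 = i}} ⟨(true, i), rfl⟩
    ⟨(false, i), rfl⟩ (by simp) ?_ _
  rintro ⟨⟨_ | _, _⟩, rfl⟩ <;> simp

theorem hasSum_sub (hre : LeftReorderable S) (hone : SumsSingletons S)
    (hpair : SumsPairs S) (hfun : SumIsFunctional S) (hx : S I a x) {b : I → X} {y : X}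
    (hy : S I b y) : S I (fun i => a i - b i) (x - y) := by
  simpa [sub_eq_add_neg] using
    hre.hasSum_add hone hpair hfun hx (hre.hasSum_mul_left hone hfun hy (-1))

theorem hasSum_tail (hre : LeftReorderable S) (hone : SumsSingletons S)
    (hpair : SumsPairs S) (hfun : SumIsFunctional S) (hempty : S PEmpty (fun i => i.elim) 0)
    {b : ℕ → X} {e : X} (hb : S ℕ b e) (n : ℕ) :
    S {i // n ≤ i} (fun i => b i.1) (e - ∑ i ∈ Finset.range n, b i) := by
  obtain ⟨s, hs⟩ := hre.exists_hasSum_part hone (existsUnique_mem_cond (fun i => n ≤ i)) hb true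
  have hhead : S {i // ¬ n ≤ i} (fun i => b i.1) (∑ i ∈ Finset.range n, b i) :=
    hre.hasSum_comp_equiv hone (hre.hasSum_finset hone hpair hfun hempty _ b)
      (Equiv.subtypeEquivRight fun i => by simp)
  obtain rfl : e = s + ∑ i ∈ Finset.range n, b i :=
    hfun _ _ _ _ hb (hre.hasSum_of_compl hone hpair hfun _ hs hhead)
  rwa [add_sub_cancel_right]

theorem eq_zero_of_hasSum_of_mul_eq_self (hre : LeftReorderable S) (hone : SumsSingletons S)
    (hpair : SumsPairs S) (hfun : SumIsFunctional S) (hempty : S PEmpty (fun i => i.elim) 0)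
    {b : ℕ → X} {e : X} (hb : S ℕ b e) (hbJ : ∀ i, b i ∈ (⊥ : Ideal X).jacobson)
    (hbe : ∀ i, b i * e = b i) : e = 0 := by
  set σ : ℕ → X := fun n => ∑ i ∈ Finset.range n, b i
  choose v hv using fun n => Ideal.exists_mul_one_sub_eq_one_of_mem_jacobson_bot
    (Ideal.sum_mem _ fun i _ => hbJ i : σ n ∈ _)
  have hv0 : v 0 = 1 := by simpa [σ] using hv 0
  have hvτ : ∀ n, v n * (e - σ n) = e := fun n => by
    have hσe : σ n * e = σ n := by simp only [σ, Finset.sum_mul, hbe]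
    calc v n * (e - σ n) = v n * (1 - σ n) * e := by rw [mul_assoc, sub_mul, one_mul, hσe]
      _ = e := by rw [hv, one_mul]
  have hstep : ∀ n, (v (n + 1) - v n) * (e - σ n) = v (n + 1) * b n := fun n => by
    have hτ : e - σ n = b n + (e - σ (n + 1)) := by simp only [σ, Finset.sum_range_succ]; abel
    rw [sub_mul, hvτ, hτ, mul_add, hvτ]; abel
  obtain ⟨⟨L, hL⟩, -, hR⟩ := hre ℕ ℕ b e (fun n => v (n + 1) - v n) (fun n => {i | n ≤ i})
    (fun i => v (i + 1) - v 0) hb fun i => by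
      rw [← Finset.sum_range_sub]
      exact hre.hasSum_comp_equiv hone
        (hre.hasSum_finset hone hpair hfun hempty (Finset.range (i + 1)) fun n => v (n + 1) - v n)
        (Equiv.subtypeEquivRight fun n => by simp)
  obtain ⟨R, hRu, hLR⟩ := hR (fun n => e - σ n) (hre.hasSum_tail hone hpair hfun hempty hb)
  simp only [hstep] at hRu
  rw [hLR L hL] at hL
  have h0 := hre.hasSum_sub hone hpair hfun hRu hL
  simp only [← sub_mul, sub_sub_cancel, hv0, one_mul, sub_self] at h0
  exact hfun _ _ _ _ hb h0

def leftCombinations (hre : LeftReorderable S) (hone : SumsSingletons S)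
    (hpair : SumsPairs S) (hfun : SumIsFunctional S) (hx : S I a x) : Ideal X where
  carrier := {z | ∃ r : I → X, S I (fun i => r i * a i) z}
  add_mem' := by
    rintro _ _ ⟨r, hr⟩ ⟨r', hr'⟩
    exact ⟨r + r', by simpa [add_mul] using hre.hasSum_add hone hpair hfun hr hr'⟩
  zero_mem' := ⟨0, by simpa using hre.hasSum_mul_left hone hfun hx 0⟩
  smul_mem' := by
    rintro c _ ⟨r, hr⟩
    exact ⟨fun i => c * r i, by simpa [mul_assoc] using hre.hasSum_mul_left hone hfun hr c⟩

theorem eq_zero_of_isIdempotentElem_mem_leftCombinations (hre : LeftReorderable S)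
    (hone : SumsSingletons S) (hpair : SumsPairs S) (hfun : SumIsFunctional S)
    (hempty : S PEmpty (fun i => i.elim) 0) {a : ℕ → X} {x : X} (hx : S ℕ a x)
    (haJ : ∀ i, a i ∈ (⊥ : Ideal X).jacobson) {e : X}
    (he : e ∈ hre.leftCombinations hone hpair hfun hx) (hee : e * e = e) : e = 0 := by
  obtain ⟨r, hr⟩ := he
  refine hre.eq_zero_of_hasSum_of_mul_eq_self hone hpair hfun hempty
    (b := fun i => r i * a i * e) ?_
    (fun i => Ideal.mul_mem_right _ _ (Ideal.mul_mem_left _ _ (haJ i)))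
    (fun i => by rw [mul_assoc, hee])
  simpa [hee] using hre.hasSum_mul_right hone hfun hr hr

end LeftReorderable

theorem stmt_19_general {X : Type*} [Ring X]
    (S : (I : Type) → (I → X) → X → Prop)
    (hfun : ∀ (I : Type) (a : I → X) (x y : X), S I a x → S I a y → x = y)
    (hreord : LeftReorderable S)
    (hempty : S PEmpty (fun i => i.elim) 0)
    (hsingle : ∀ (I : Type) (i₀ : I), (∀ i, i = i₀) → ∀ a : I → X, S I a (a i₀))
    (hpair : ∀ (I : Type) (i₀ i₁ : I), i₀ ≠ i₁ → (∀ i, i = i₀ ∨ i = i₁) →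
      ∀ a : I → X, S I a (a i₀ + a i₁))
    (hI0 : ∀ L : Ideal X, (∀ e ∈ L, e * e = e → e = 0) →
      L ≤ (⊥ : Ideal X).jacobson) :
    ∀ (a : ℕ → X) (x : X), S ℕ a x → (∀ i, a i ∈ (⊥ : Ideal X).jacobson) →
      x ∈ (⊥ : Ideal X).jacobson := by
  intro a x hx haJ
  refine hI0 (hreord.leftCombinations hsingle hpair hfun hx)
    (fun e he hee => hreord.eq_zero_of_isIdempotentElem_mem_leftCombinations hsingle hpair hfun
      hempty hx haJ he hee) ⟨fun _ => 1, ?_⟩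
  simpa using hx

/-- Let `X` be a reorderable ring (left reorderability,
surjectivity, `Σ() = 0`, singletons sum simply, two-entry families sum by ring
addition) which is an `I₀`-ring: every left ideal without nonzero idempotents is
contained in the Jacobson radical `J`.  Then `J` is closed under countable `Σ`-sums. -/
theorem stmt_19 {X : Type*} [Ring X]
    (S : (I : Type) → (I → X) → X → Prop)
    (hfun : ∀ (I : Type) (a : I → X) (x y : X), S I a x → S I a y → x = y)
    (hreord : LeftReorderable S)
    (hsurj : ∀ x : X, ∃ (I : Type) (a : I → X), S I a x)
    (hempty : S PEmpty (fun i => i.elim) 0)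
    (hsingle : ∀ (I : Type) (i₀ : I), (∀ i, i = i₀) → ∀ a : I → X, S I a (a i₀))
    (hpair : ∀ (I : Type) (i₀ i₁ : I), i₀ ≠ i₁ → (∀ i, i = i₀ ∨ i = i₁) →
      ∀ a : I → X, S I a (a i₀ + a i₁))
    (hI0 : ∀ L : Ideal X, (∀ e ∈ L, e * e = e → e = 0) →
      L ≤ (⊥ : Ideal X).jacobson) :
    ∀ (a : ℕ → X) (x : X), S ℕ a x → (∀ i, a i ∈ (⊥ : Ideal X).jacobson) →
      x ∈ (⊥ : Ideal X).jacobson :=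
  stmt_19_general S hfun hreord hempty hsingle hpair hI0
end
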